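/- arXiv:2404.00711 — 5 statements merged into one kernel-verified Lean document; each statement's English description precedes it below -/
import Mathlib

section
/- Let r, q ∈ ℚ with 0 < r < q ≤ 1, let M be a positive integer with Mr ∈ ℤ and Mq ∈ ℤ, and let p be a prime with p ≡ 1 (mod M). Then (p−1)r and (p−1)(q−r) are positive integers, the rational number (1+r−q)_{(p−1)r} / ((p−1)r)! is a p-adic integer, and in ℤ_p one has (1+r−q)_{(p−1)r} / ((p−1)r)! ≡ −J(ω̄_p^{(p−1)r}, ω̄_p^{(p−1)(q−r)}) (mod p·ℤ_p). -/
open scoped BigOperators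

noncomputable section

/-- The rising factorial (Pochhammer symbol) `(a)_k` for a rational `a`. -/
def poch (a : ℚ) (k : ℕ) : ℚ := Polynomial.eval a (ascPochhammer ℚ k)

/-- The Jacobi sum `J(χ,ψ) = Σ_{x ∈ ZMod p} χ(x)·ψ(1−x)` of two `ℤ_p`-valued maps on `ZMod p`. -/
def jacobiSumP {p : ℕ} [Fact (Nat.Prime p)] (χ ψ : ZMod p → ℤ_[p]) : ℤ_[p] :=
  ∑ x : ZMod p, χ x * ψ (1 - x)

/-! Put `a = (p-1)r` and `b = (p-1)(q-r)`. Then `1 + r - q = 1 - b/(p-1) ≡ 1 + b (mod p)`, so the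
Pochhammer quotient reduces to `(b+1)_a / a!`. Since `ω̄` reduces to `t ↦ t⁻¹`, the Jacobi sum
reduces to `∑ₜ t^(p-1-a) (1-t)^(p-1-b)`. Over `𝔽_p` the power sum `∑ₜ t^k` is `-1` for `k = p-1`
and `0` for every other `k < 2(p-1)`, so this is minus the coefficient of `t^a` in
`(1-t)^(p-1-b)`, namely `-(-1)^a C(p-1-b, a)`; as `p-1-b ≡ -(b+1)`, that is `-(b+1)_a / a!`. -/

open Finset Polynomial

theorem Polynomial.coeff_one_sub_X_pow {R : Type*} [CommRing R] (n k : ℕ) :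
    ((1 - X : R[X]) ^ n).coeff k = (-1) ^ k * n.choose k := by
  rw [show (1 - X : R[X]) = C (-1) * (X + C (-1)) by simp; ring, mul_pow, ← C_pow, coeff_C_mul,
    coeff_X_add_C_pow, ← mul_assoc, ← pow_add]
  rcases le_or_gt k n with hkn | hnk
  · congr 1
    rw [show n + (n - k) = k + 2 * (n - k) by omega, pow_add, pow_mul]
    simp
  · simp [Nat.choose_eq_zero_of_lt hnk]

namespace FiniteField

variable {K : Type*} [Field K] [Fintype K]

theorem inv_pow_eq_pow_card_sub_one_sub {m : ℕ} (hm0 : 0 < m)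
    (hm : m < Fintype.card K - 1) (t : K) : t⁻¹ ^ m = t ^ (Fintype.card K - 1 - m) := by
  rcases eq_or_ne t 0 with rfl | ht
  · rw [inv_zero, zero_pow hm0.ne', zero_pow (by omega)]
  · rw [pow_sub₀ _ ht (by omega), FiniteField.pow_card_sub_one_eq_one t ht, one_mul, inv_pow]

theorem sum_pow_of_lt_two_mul {k : ℕ} (hk : k < 2 * (Fintype.card K - 1)) :
    ∑ x : K, x ^ k = if k = Fintype.card K - 1 then -1 else 0 := by
  have hq : 1 < Fintype.card K := Fintype.one_lt_card
  rcases lt_trichotomy k (Fintype.card K - 1) with hlt | rfl | hgt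
  · rw [FiniteField.sum_pow_lt_card_sub_one K k hlt, if_neg hlt.ne]
  · classical
    rw [if_pos rfl, Fintype.sum_eq_add_sum_compl 0, zero_pow (by omega), zero_add,
      sum_congr rfl fun x hx => FiniteField.pow_card_sub_one_eq_one x (by simpa using hx)]
    simp [Finset.card_compl, Nat.cast_sub hq.le]
  · have hpow (x : K) : x ^ k = x ^ (k - (Fintype.card K - 1)) := by
      rcases eq_or_ne x 0 with rfl | hx
      · rw [zero_pow (by omega), zero_pow (by omega)]
      · rw [← pow_sub_mul_pow x hgt.le, FiniteField.pow_card_sub_one_eq_one x hx, mul_one]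
    simp_rw [hpow]
    rw [FiniteField.sum_pow_lt_card_sub_one K _ (by omega), if_neg hgt.ne']

theorem sum_eval_eq_neg_coeff {f : K[X]}
    (hf : f.natDegree < 2 * (Fintype.card K - 1)) :
    ∑ x : K, f.eval x = -f.coeff (Fintype.card K - 1) := by
  have hq : 1 < Fintype.card K := Fintype.one_lt_card
  simp_rw [eval_eq_sum_range' hf]
  rw [sum_comm]
  simp_rw [← mul_sum]
  rw [sum_congr rfl fun k hk => by rw [sum_pow_of_lt_two_mul (mem_range.mp hk)]]
  simp [mul_ite, sum_ite_eq', hq]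

theorem sum_inv_pow_mul_one_sub_inv_pow {a b : ℕ} (ha : 0 < a) (hb : 0 < b)
    (hab : a + b ≤ Fintype.card K - 1) :
    ∑ t : K, t⁻¹ ^ a * (1 - t)⁻¹ ^ b = -((-1) ^ a * (Fintype.card K - 1 - b).choose a) := by
  set q := Fintype.card K
  have hpoly (t : K) :
      t⁻¹ ^ a * (1 - t)⁻¹ ^ b = (X ^ (q - 1 - a) * (1 - X : K[X]) ^ (q - 1 - b)).eval t := by
    rw [inv_pow_eq_pow_card_sub_one_sub ha (by omega),
      inv_pow_eq_pow_card_sub_one_sub hb (by omega)]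
    simp [q]
  have hdeg : (X ^ (q - 1 - a) * (1 - X : K[X]) ^ (q - 1 - b)).natDegree
      ≤ (q - 1 - a) + (q - 1 - b) := by
    compute_degree
  simp_rw [hpoly]
  rw [sum_eval_eq_neg_coeff (by omega), coeff_X_pow_mul', if_pos (by omega),
    show q - 1 - (q - 1 - a) = a by omega, coeff_one_sub_X_pow]

end FiniteField

theorem map_ascPochhammer_eval {R S : Type*} [CommSemiring R] [CommSemiring S] (f : R →+* S)
    (n : ℕ) (x : R) : f ((ascPochhammer R n).eval x) = (ascPochhammer S n).eval (f x) := by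
  rw [← ascPochhammer_map f, eval_map, eval₂_at_apply]

theorem ascPochhammer_eval_neg_natCast {R : Type*} [CommRing R] (n k : ℕ) :
    (ascPochhammer R k).eval (-(n : R)) = (-1) ^ k * (k.factorial * n.choose k : ℕ) := by
  rw [ascPochhammer_eval_neg_eq_descPochhammer, descPochhammer_eval_eq_descFactorial,
    Nat.descFactorial_eq_factorial_mul_choose]

theorem ZMod.neg_one_pow_mul_choose_mul_factorial {p : ℕ} [Fact p.Prime] {b : ℕ} (hb : b < p)
    (a : ℕ) : (-1) ^ a * ((p - 1 - b).choose a : ZMod p) * a.factorial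
      = (ascPochhammer (ZMod p) a).eval (b + 1 : ZMod p) := by
  have hneg : -((p - 1 - b : ℕ) : ZMod p) = b + 1 := by
    rw [Nat.sub_sub, Nat.cast_sub (by omega), ZMod.natCast_self]
    push_cast; ring
  rw [← hneg, ascPochhammer_eval_neg_natCast]
  push_cast; ring

namespace PadicInt

variable {p : ℕ} [Fact p.Prime]

theorem natCast_dvd_of_coprime {n : ℕ} (hn : p.Coprime n) (x : ℤ_[p]) : (n : ℤ_[p]) ∣ x :=
  (isUnit_iff.mpr (norm_natCast_eq_one_iff.mpr hn)).dvd

theorem dvd_of_toZMod_eq_zero {x : ℤ_[p]} (hx : toZMod x = 0) : (p : ℤ_[p]) ∣ x := by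
  rwa [← Ideal.mem_span_singleton, ← maximalIdeal_eq_span_p, ← ker_toZMod, RingHom.mem_ker]

theorem exists_coe_eq_of_natCast_mul_eq {n : ℕ} (hn : p.Coprime n) {x : ℚ} {m : ℤ}
    (hx : (n : ℚ) * x = m) : ∃ z : ℤ_[p], (x : ℚ_[p]) = z ∧ (n : ZMod p) * toZMod z = m := by
  obtain ⟨z, hz⟩ := natCast_dvd_of_coprime hn (m : ℤ_[p])
  refine ⟨z, ?_, by simpa using (congrArg toZMod hz).symm⟩
  have hn0 : (n : ℚ_[p]) ≠ 0 :=
    norm_ne_zero_iff.mp (by rw [Padic.norm_natCast_eq_one_iff.mpr hn]; exact one_ne_zero)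
  apply mul_left_cancel₀ hn0
  have := congrArg ((↑) : ℤ_[p] → ℚ_[p]) hz
  push_cast at this
  rw [← this]; exact_mod_cast hx

theorem exists_coe_eq_one_sub_div {b : ℕ} {x : ℚ} (hx : ((p : ℚ) - 1) * x = p - 1 - b) :
    ∃ z : ℤ_[p], (x : ℚ_[p]) = z ∧ toZMod z = b + 1 := by
  have hp := (Fact.out : p.Prime).one_lt
  obtain ⟨z, hxz, hz⟩ := exists_coe_eq_of_natCast_mul_eq (n := p - 1)
    ((Nat.coprime_self_sub_right hp.le).mpr (Nat.coprime_one_right p)) (m := p - 1 - b)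
    (by push_cast [Nat.cast_sub hp.le]; exact hx)
  refine ⟨z, hxz, ?_⟩
  rw [Nat.cast_sub hp.le, ZMod.natCast_self] at hz
  push_cast [ZMod.natCast_self] at hz
  linear_combination -hz

theorem exists_coe_eq_poch_div_factorial {a : ℕ} (hap : a < p) {x : ℚ} {z : ℤ_[p]}
    (hxz : (x : ℚ_[p]) = z) :
    ∃ X : ℤ_[p], (X : ℚ_[p]) = ((poch x a / a.factorial : ℚ) : ℚ_[p]) ∧
      toZMod X * a.factorial = (ascPochhammer (ZMod p) a).eval (toZMod z) := by
  have hcop : p.Coprime a.factorial := (Fact.out : p.Prime).coprime_iff_not_dvd.mpr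
    (by rw [(Fact.out : p.Prime).dvd_factorial]; omega)
  obtain ⟨X, hX⟩ := natCast_dvd_of_coprime hcop ((ascPochhammer ℤ_[p] a).eval z)
  refine ⟨X, ?_, ?_⟩
  · have hpoch : ((poch x a : ℚ) : ℚ_[p]) = a.factorial * X := by
      rw [poch, ← eq_ratCast (Rat.castHom ℚ_[p]), map_ascPochhammer_eval, eq_ratCast, hxz]
      have h := map_ascPochhammer_eval Coe.ringHom a z
      rw [hX, map_mul, map_natCast] at h
      exact h.symm
    rw [Rat.cast_div, hpoch, Rat.cast_natCast, mul_div_cancel_left₀]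
    exact_mod_cast a.factorial_ne_zero
  · rw [mul_comm, ← map_natCast toZMod, ← map_mul, ← hX, map_ascPochhammer_eval]

theorem toZMod_eq_inv_of_mul_eq_one {ω ωb : ZMod p → ℤ_[p]}
    (hω_red : ∀ x, toZMod (ω x) = x) (hωb_zero : ωb 0 = 0)
    (hωb_inv : ∀ x, x ≠ 0 → ω x * ωb x = 1) (x : ZMod p) : toZMod (ωb x) = x⁻¹ := by
  rcases eq_or_ne x 0 with rfl | hx
  · rw [hωb_zero, map_zero, inv_zero]
  · refine (inv_eq_of_mul_eq_one_right ?_).symm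
    nth_rewrite 1 [← hω_red x]
    rw [← map_mul, hωb_inv x hx, map_one]

theorem toZMod_jacobiSumP_mul_factorial {a b : ℕ} (ha : 0 < a) (hb : 0 < b) (hab : a + b ≤ p - 1)
    {ω ωb : ZMod p → ℤ_[p]} (hω_red : ∀ x, toZMod (ω x) = x) (hωb_zero : ωb 0 = 0)
    (hωb_inv : ∀ x, x ≠ 0 → ω x * ωb x = 1) :
    toZMod (jacobiSumP (fun t => ωb t ^ a) (fun t => ωb t ^ b)) * a.factorial
      = -(ascPochhammer (ZMod p) a).eval (b + 1 : ZMod p) := by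
  simp only [jacobiSumP, map_sum, map_mul, map_pow,
    toZMod_eq_inv_of_mul_eq_one hω_red hωb_zero hωb_inv]
  rw [FiniteField.sum_inv_pow_mul_one_sub_inv_pow ha hb (by rwa [ZMod.card]), ZMod.card, neg_mul,
    ZMod.neg_one_pow_mul_choose_mul_factorial (by omega)]

end PadicInt

theorem exists_natCast_eq_sub_one_mul {p M : ℕ} (hpM : p ≡ 1 [MOD M]) (hp : 1 ≤ p) {s : ℚ}
    (hs : 0 ≤ s) (hMs : ∃ z : ℤ, (M : ℚ) * s = z) : ∃ n : ℕ, (n : ℚ) = (p - 1) * s := by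
  obtain ⟨k, hk⟩ := (Nat.modEq_iff_dvd' hp).mp hpM.symm
  obtain ⟨z, hz⟩ := hMs
  have hks : ((p : ℚ) - 1) * s = (k * z : ℤ) := by
    rw [← Nat.cast_one, ← Nat.cast_sub hp, hk]
    push_cast
    rw [← hz]
    ring
  have hkz : 0 ≤ k * z := by
    have : (0 : ℚ) ≤ (k * z : ℤ) := hks ▸ mul_nonneg (by simpa using hp) hs
    exact_mod_cast this
  exact ⟨(k * z).toNat, by rw [hks, ← Int.cast_natCast, Int.toNat_of_nonneg hkz]⟩

theorem pochhammer_quotient_congr_jacobi_general (p M : ℕ) [Fact (Nat.Prime p)]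
    (r q : ℚ) (hr0 : 0 < r) (hrq : r < q) (hq1 : q ≤ 1)
    (hMr : ∃ z : ℤ, (M : ℚ) * r = (z : ℚ)) (hMq : ∃ z : ℤ, (M : ℚ) * q = (z : ℚ))
    (hpM : p ≡ 1 [MOD M])
    (ω ωb : ZMod p → ℤ_[p])
    (hω_red : ∀ x : ZMod p, PadicInt.toZMod (ω x) = x)
    (hωb_zero : ωb 0 = 0)
    (hωb_inv : ∀ x : ZMod p, x ≠ 0 → ω x * ωb x = 1) :
    ∃ a b : ℕ, 0 < a ∧ 0 < b ∧
      (a : ℚ) = ((p : ℚ) - 1) * r ∧ (b : ℚ) = ((p : ℚ) - 1) * (q - r) ∧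
      ‖((poch (1 + r - q) a / (a.factorial : ℚ) : ℚ) : ℚ_[p])‖ ≤ 1 ∧
      ∃ c : ℤ_[p],
        ((poch (1 + r - q) a / (a.factorial : ℚ) : ℚ) : ℚ_[p])
            + ((jacobiSumP (fun t => ωb t ^ a) (fun t => ωb t ^ b) : ℤ_[p]) : ℚ_[p])
          = (p : ℚ_[p]) * (c : ℚ_[p]) := by
  have hp : 1 < p := (Fact.out : p.Prime).one_lt
  have hpQ : (1 : ℚ) < p := by exact_mod_cast hp
  obtain ⟨zr, hzr⟩ := hMr
  obtain ⟨zq, hzq⟩ := hMq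
  obtain ⟨a, ha⟩ := exists_natCast_eq_sub_one_mul hpM hp.le hr0.le ⟨zr, hzr⟩
  obtain ⟨b, hb⟩ := exists_natCast_eq_sub_one_mul hpM hp.le (sub_nonneg.mpr hrq.le)
    ⟨zq - zr, by push_cast; rw [mul_sub, hzq, hzr]⟩
  have ha0 : 0 < a := by exact_mod_cast (show (0 : ℚ) < a by rw [ha]; nlinarith)
  have hb0 : 0 < b := by exact_mod_cast (show (0 : ℚ) < b by rw [hb]; nlinarith)
  have hab : a + b + 1 ≤ p := by
    exact_mod_cast (show (a + b + 1 : ℚ) ≤ p by rw [ha, hb]; nlinarith)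
  refine ⟨a, b, ha0, hb0, ha, hb, ?_⟩
  obtain ⟨z, hxz, hz⟩ := PadicInt.exists_coe_eq_one_sub_div (p := p) (x := 1 + r - q) (b := b)
    (by rw [hb]; ring)
  obtain ⟨X, hX, hXred⟩ := PadicInt.exists_coe_eq_poch_div_factorial (by omega : a < p) hxz
  have hJred := PadicInt.toZMod_jacobiSumP_mul_factorial ha0 hb0 (by omega) hω_red hωb_zero hωb_inv
  set J := jacobiSumP (fun t => ωb t ^ a) (fun t => ωb t ^ b)
  have hsum : PadicInt.toZMod (X + J) = 0 := by
    have hfact : (a.factorial : ZMod p) ≠ 0 := by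
      rw [Ne, ZMod.natCast_eq_zero_iff, (Fact.out : p.Prime).dvd_factorial]; omega
    refine (mul_eq_zero.mp ?_).resolve_right hfact
    rw [map_add, add_mul, hXred, hJred, hz, add_neg_cancel]
  obtain ⟨c, hc⟩ := PadicInt.dvd_of_toZMod_eq_zero hsum
  refine ⟨hX ▸ X.norm_le_one, c, ?_⟩
  rw [← hX]
  exact_mod_cast congrArg ((↑) : ℤ_[p] → ℚ_[p]) hc

/-- Let `r, q ∈ ℚ` with `0 < r < q ≤ 1`, let `M` be a positive integer with
`Mr, Mq ∈ ℤ`, and let `p ≡ 1 (mod M)` be prime.  Then `(p−1)r` and `(p−1)(q−r)` are positive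
integers `a`, `b`, the rational `(1+r−q)_{(p−1)r}/((p−1)r)!` is a `p`-adic integer, and
`(1+r−q)_{(p−1)r}/((p−1)r)! ≡ −J(ω̄^{(p−1)r}, ω̄^{(p−1)(q−r)}) (mod p·ℤ_p)`. -/
theorem pochhammer_quotient_congr_jacobi (p M : ℕ) [Fact (Nat.Prime p)] (hM : 0 < M)
    (r q : ℚ) (hr0 : 0 < r) (hrq : r < q) (hq1 : q ≤ 1)
    (hMr : ∃ z : ℤ, (M : ℚ) * r = (z : ℚ)) (hMq : ∃ z : ℤ, (M : ℚ) * q = (z : ℚ))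
    (hpM : p ≡ 1 [MOD M])
    (ω ωb : ZMod p → ℤ_[p])
    (hω_mul : ∀ x y : ZMod p, ω (x * y) = ω x * ω y)
    (hω_red : ∀ x : ZMod p, PadicInt.toZMod (ω x) = x)
    (hωb_zero : ωb 0 = 0)
    (hωb_inv : ∀ x : ZMod p, x ≠ 0 → ω x * ωb x = 1) :
    ∃ a b : ℕ, 0 < a ∧ 0 < b ∧
      (a : ℚ) = ((p : ℚ) - 1) * r ∧ (b : ℚ) = ((p : ℚ) - 1) * (q - r) ∧
      ‖((poch (1 + r - q) a / (a.factorial : ℚ) : ℚ) : ℚ_[p])‖ ≤ 1 ∧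
      ∃ c : ℤ_[p],
        ((poch (1 + r - q) a / (a.factorial : ℚ) : ℚ) : ℚ_[p])
            + ((jacobiSumP (fun t => ωb t ^ a) (fun t => ωb t ^ b) : ℤ_[p]) : ℚ_[p])
          = (p : ℚ_[p]) * (c : ℚ_[p]) :=
  pochhammer_quotient_congr_jacobi_general p M r q hr0 hrq hq1 hMr hMq hpM ω ωb hω_red hωb_zero
    hωb_inv
end
end

section
/- Let n ∈ {3,4}; let r₁,…,r_{n−1} ∈ ℚ with 0 < r₁ ≤ ⋯ ≤ r_{n−1} < 1; let r_n, q_n ∈ ℚ with 0 < r_n < q_n ≤ 1 and r₂ < q_n. Let M be a common denominator of r₁,…,r_n, q_n and let p be a prime with p ≡ 1 (mod M); set k₀ := (p−1)r_n, a positive integer. Then both sums below are p-adic integers and, in ℤ_p, Σ_{i=0}^{k₀} [((1−p)r_n)_i · (r₁)_i⋯(r_{n−1})_i] / [(q_n − p·r_n)_i · (i!)^{n−1}] ≡ Σ_{i=0}^{p−1} [(r_n)_i · (r₁)_i⋯(r_{n−1})_i] / [(q_n)_i · (i!)^{n−1}] (mod p·ℤ_p). -/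
open scoped BigOperators

noncomputable section

/-!
Every parameter `y` satisfies `(p - 1) y ∈ ℕ`, so `y` is a `p`-adic integer and `y + j` is a
`p`-adic unit for `0 ≤ j < p` except at `j = (p - 1) y`, where `y + j = p y`. With
`b = (p - 1) qₙ`, the symbol `(qₙ)_i` is thus a unit for `i ≤ b` and has valuation exactly `1`
for `b < i < p`, while `(rₙ)_i` is divisible by `p` for `i > k₀` and `(r₂)_i` for
`i > (p - 1) r₂`, which is `< b`. Hence the terms of the second sum with `k₀ < i < p` vanish
modulo `p`. For `i ≤ k₀ < b` the parameters of the two sums differ by `p rₙ`, and in an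
ultrametric field `a ↦ (a)_i` is `1`-Lipschitz on the unit ball, so those terms agree modulo `p`.
-/

open Finset Polynomial IsUltrametricDist
open scoped Nat

lemma ascPochhammer_eval_eq_prod_range {R : Type*} [CommSemiring R] (a : R) (k : ℕ) :
    (ascPochhammer R k).eval a = ∏ j ∈ range k, (a + j) := by
  induction k with
  | zero => simp
  | succ k ih => rw [ascPochhammer_succ_eval, ih, prod_range_succ]

lemma ratCast_poch {K : Type*} [Field K] [CharZero K] (a : ℚ) (k : ℕ) :
    ((poch a k : ℚ) : K) = (ascPochhammer K k).eval (a : K) := by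
  simp [poch, ascPochhammer_eval_eq_prod_range]

/-- The `i`-th term of a generalized hypergeometric series with upper parameters
`a, s 0, …, s (m - 1)` and lower parameters `d, 1, …, 1`. -/
def hypergeomTerm {K : Type*} [Field K] (a d : K) (s : ℕ → K) (m i : ℕ) : K :=
  (ascPochhammer K i).eval a / (ascPochhammer K i).eval d *
    ((∏ j ∈ range m, (ascPochhammer K i).eval (s j)) / (i ! : K) ^ m)

lemma ratCast_sum_eq_sum_hypergeomTerm {K : Type*} [Field K] [CharZero K] (a d : ℚ)
    (s : ℕ → ℚ) (m : ℕ) (t : Finset ℕ) :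
    ((∑ i ∈ t, (poch a i * ∏ j ∈ range m, poch (s j) i) / (poch d i * (i ! : ℚ) ^ m) : ℚ) : K) =
      ∑ i ∈ t, hypergeomTerm (a : K) d (fun j => s j) m i := by
  push_cast [ratCast_poch]
  exact sum_congr rfl fun i _ => mul_div_mul_comm _ _ _ _

lemma norm_ascPochhammer_eval_eq_one {K : Type*} [NormedField K] {a : K} {k : ℕ}
    (h : ∀ j < k, ‖a + j‖ = 1) : ‖(ascPochhammer K k).eval a‖ = 1 := by
  rw [ascPochhammer_eval_eq_prod_range, norm_prod]
  exact prod_eq_one fun j hj => h j (mem_range.1 hj)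

section Ultrametric

variable {K : Type*} [NormedField K] [IsUltrametricDist K]

lemma norm_add_natCast_le_one {a : K} (ha : ‖a‖ ≤ 1) (j : ℕ) : ‖a + j‖ ≤ 1 :=
  (norm_add_le_max _ _).trans (max_le ha (norm_natCast_le_one K j))

lemma norm_prod_add_natCast_le_one {a : K} (ha : ‖a‖ ≤ 1) (t : Finset ℕ) :
    ‖∏ j ∈ t, (a + j)‖ ≤ 1 := by
  rw [norm_prod]
  exact prod_le_one (fun _ _ => norm_nonneg _) fun j _ => norm_add_natCast_le_one ha j

lemma norm_ascPochhammer_eval_le_one {a : K} (ha : ‖a‖ ≤ 1) (k : ℕ) :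
    ‖(ascPochhammer K k).eval a‖ ≤ 1 := by
  rw [ascPochhammer_eval_eq_prod_range]
  exact norm_prod_add_natCast_le_one ha _

lemma norm_ascPochhammer_eval_le_norm_add {a : K} (ha : ‖a‖ ≤ 1) {j k : ℕ} (hjk : j < k) :
    ‖(ascPochhammer K k).eval a‖ ≤ ‖a + j‖ := by
  rw [ascPochhammer_eval_eq_prod_range, ← mul_prod_erase _ _ (mem_range.2 hjk), norm_mul]
  exact mul_le_of_le_one_right (norm_nonneg _) (norm_prod_add_natCast_le_one ha _)

lemma norm_ascPochhammer_eval_sub_le {a b : K} (ha : ‖a‖ ≤ 1) (hb : ‖b‖ ≤ 1) (k : ℕ) :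
    ‖(ascPochhammer K k).eval a - (ascPochhammer K k).eval b‖ ≤ ‖a - b‖ := by
  induction k with
  | zero => simp
  | succ k ih =>
    have hsplit : (ascPochhammer K (k + 1)).eval a - (ascPochhammer K (k + 1)).eval b =
        ((ascPochhammer K k).eval a - (ascPochhammer K k).eval b) * (a + k) +
          (ascPochhammer K k).eval b * (a - b) := by
      simp only [ascPochhammer_succ_eval]; ring
    rw [hsplit]
    refine (norm_add_le_max _ _).trans (max_le ?_ ?_) <;> rw [norm_mul]
    · exact (mul_le_of_le_one_right (norm_nonneg _) (norm_add_natCast_le_one ha k)).trans ih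
    · exact mul_le_of_le_one_left (norm_nonneg _) (norm_ascPochhammer_eval_le_one hb k)

lemma norm_eq_one_of_norm_sub_lt_one {d d' : K} (hd : ‖d‖ = 1) (h : ‖d' - d‖ < 1) :
    ‖d'‖ = 1 := by
  have := norm_add_eq_max_of_norm_ne_norm (x := d) (y := d' - d) (by rw [hd]; exact h.ne')
  rwa [add_sub_cancel, hd, max_eq_left h.le] at this

lemma norm_div_sub_div_le {a a' d d' : K} {ε : ℝ} (ha' : ‖a'‖ ≤ 1) (hd : ‖d‖ = 1)
    (hd' : ‖d'‖ = 1) (haa' : ‖a - a'‖ ≤ ε) (hdd' : ‖d - d'‖ ≤ ε) :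
    ‖a / d - a' / d'‖ ≤ ε := by
  have hd0 : d ≠ 0 := norm_ne_zero_iff.1 (by simp [hd])
  have hd0' : d' ≠ 0 := norm_ne_zero_iff.1 (by simp [hd'])
  rw [div_sub_div _ _ hd0 hd0', norm_div, norm_mul, hd, hd', mul_one, div_one,
    show a * d' - d * a' = (a - a') * d' + a' * (d' - d) by ring]
  refine (norm_add_le_max _ _).trans (max_le ?_ ?_) <;> rw [norm_mul]
  · rwa [hd', mul_one]
  · exact (mul_le_of_le_one_left (norm_nonneg _) ha').trans (norm_sub_rev d' d ▸ hdd')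

end Ultrametric

section Padic

variable {p : ℕ} [hp : Fact p.Prime]

lemma inv_p_lt_one : (p : ℝ)⁻¹ < 1 :=
  inv_lt_one_of_one_lt₀ (by exact_mod_cast hp.out.one_lt)

lemma norm_p_mul_le_inv {x : ℚ_[p]} (hx : ‖x‖ ≤ 1) : ‖(p : ℚ_[p]) * x‖ ≤ (p : ℝ)⁻¹ := by
  rw [norm_mul, Padic.norm_p]
  exact mul_le_of_le_one_right (by positivity) hx

lemma norm_p_sub_one : ‖(p : ℚ_[p]) - 1‖ = 1 := by
  have hlt : ‖(p : ℚ_[p])‖ < ‖(-1 : ℚ_[p])‖ := by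
    rw [Padic.norm_p, norm_neg, norm_one]; exact inv_p_lt_one
  rw [sub_eq_add_neg, norm_add_eq_max_of_norm_ne_norm hlt.ne, max_eq_right hlt.le, norm_neg,
    norm_one]

lemma norm_le_one_of_sub_one_mul_eq_natCast {x : ℚ_[p]} {c : ℕ} (h : (p - 1) * x = c) :
    ‖x‖ ≤ 1 := by
  have := norm_natCast_le_one ℚ_[p] c
  rwa [← h, norm_mul, norm_p_sub_one, one_mul] at this

lemma norm_add_natCast_eq_one {x : ℚ_[p]} {b j : ℕ} (h : (p - 1) * x = b) (hb : b < p)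
    (hj : j < p) (hjb : j ≠ b) : ‖x + j‖ = 1 := by
  have hunit : ‖((b - j : ℤ) : ℚ_[p])‖ = 1 := by
    refine le_antisymm (Padic.norm_int_le_one _) (not_lt.1 fun hlt => hjb ?_)
    have := Int.eq_zero_of_abs_lt_dvd (Padic.norm_intCast_lt_one_iff.1 hlt)
      (by rw [abs_lt]; omega)
    omega
  have hsmall : ‖(p : ℚ_[p]) * j‖ < 1 :=
    (norm_p_mul_le_inv (norm_natCast_le_one _ j)).trans_lt inv_p_lt_one
  -- `(p - 1) * (x + j) ≡ b - j` modulo `p`, and `0 < |b - j| < p`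
  have hsplit : (p - 1) * (x + j) = ((b - j : ℤ) : ℚ_[p]) + p * j := by
    rw [mul_add, h]; push_cast; ring
  have := norm_add_eq_max_of_norm_ne_norm (hunit.trans_ne hsmall.ne')
  rwa [← hsplit, hunit, max_eq_left hsmall.le, norm_mul, norm_p_sub_one, one_mul] at this

lemma norm_ascPochhammer_eval_le_inv {x : ℚ_[p]} {c i : ℕ} (h : (p - 1) * x = c) (hci : c < i) :
    ‖(ascPochhammer ℚ_[p] i).eval x‖ ≤ (p : ℝ)⁻¹ := by
  have hx := norm_le_one_of_sub_one_mul_eq_natCast h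
  calc _ ≤ ‖x + c‖ := norm_ascPochhammer_eval_le_norm_add hx hci
    _ = ‖(p : ℚ_[p]) * x‖ := by rw [← h]; ring_nf
    _ ≤ (p : ℝ)⁻¹ := norm_p_mul_le_inv hx

lemma norm_ascPochhammer_eval_eq_one_of_le {q : ℚ_[p]} {b i : ℕ} (h : (p - 1) * q = b)
    (hbp : b < p) (hib : i ≤ b) : ‖(ascPochhammer ℚ_[p] i).eval q‖ = 1 :=
  norm_ascPochhammer_eval_eq_one fun j hj => norm_add_natCast_eq_one h hbp (by omega) (by omega)

lemma norm_ascPochhammer_eval_eq_inv_of_lt {q : ℚ_[p]} {b i : ℕ} (h : (p - 1) * q = b)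
    (hb : 0 < b) (hbi : b < i) (hip : i ≤ p) :
    ‖(ascPochhammer ℚ_[p] i).eval q‖ = (p : ℝ)⁻¹ := by
  have hq : ‖q‖ = 1 := by
    simpa using norm_add_natCast_eq_one h (by omega) hp.out.pos (j := 0) hb.ne
  rw [ascPochhammer_eval_eq_prod_range, norm_prod, prod_eq_single_of_mem b (mem_range.2 hbi)
    fun j hj hjb => norm_add_natCast_eq_one h (by omega) (by simp at hj; omega) hjb,
    show q + b = p * q by rw [← h]; ring, norm_mul, Padic.norm_p, hq, mul_one]

lemma norm_factorial_eq_one {i : ℕ} (hip : i < p) : ‖(i ! : ℚ_[p])‖ = 1 :=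
  Padic.norm_natCast_eq_one_iff.2 <| (Nat.Prime.coprime_iff_not_dvd hp.out).2 fun h => by
    have := hp.out.dvd_factorial.1 h; omega

lemma norm_sub_p_mul_le_one {x y : ℚ_[p]} (hx : ‖x‖ ≤ 1) (hy : ‖y‖ ≤ 1) :
    ‖y - p * x‖ ≤ 1 := by
  rw [sub_eq_add_neg]
  exact (norm_add_le_max _ _).trans (max_le hy
    (by rw [norm_neg]; exact (norm_p_mul_le_inv hx).trans inv_p_lt_one.le))

lemma norm_ascPochhammer_eval_sub_p_mul_sub_le {x y : ℚ_[p]} (hx : ‖x‖ ≤ 1) (hy : ‖y‖ ≤ 1) (i : ℕ) :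
    ‖(ascPochhammer ℚ_[p] i).eval (y - p * x) - (ascPochhammer ℚ_[p] i).eval y‖ ≤ (p : ℝ)⁻¹ := by
  refine (norm_ascPochhammer_eval_sub_le (norm_sub_p_mul_le_one hx hy) hy i).trans ?_
  rw [sub_sub_cancel_left, norm_neg]
  exact norm_p_mul_le_inv hx

lemma norm_ascPochhammer_eval_sub_p_mul_eq_one {x q : ℚ_[p]} {b i : ℕ} (hx : ‖x‖ ≤ 1)
    (hq : (p - 1) * q = b) (hbp : b < p) (hib : i ≤ b) :
    ‖(ascPochhammer ℚ_[p] i).eval (q - p * x)‖ = 1 :=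
  have hqn := norm_le_one_of_sub_one_mul_eq_natCast hq
  norm_eq_one_of_norm_sub_lt_one (norm_ascPochhammer_eval_eq_one_of_le hq hbp hib) <|
    (norm_ascPochhammer_eval_sub_p_mul_sub_le hx hqn i).trans_lt inv_p_lt_one

lemma exists_eq_p_mul_of_norm_le_inv {y : ℚ_[p]} (hy : ‖y‖ ≤ (p : ℝ)⁻¹) :
    ∃ c : ℤ_[p], y = p * c := by
  have hp0 : (p : ℚ_[p]) ≠ 0 := by exact_mod_cast hp.out.ne_zero
  refine ⟨⟨y / p, ?_⟩, ?_⟩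
  · rwa [norm_div, Padic.norm_p, div_le_one (inv_pos.2 (by exact_mod_cast hp.out.pos))]
  · simp [mul_div_cancel₀ _ hp0]

end Padic

section HypergeomTerm

variable {p : ℕ} [hp : Fact p.Prime] {x q : ℚ_[p]} {s : ℕ → ℚ_[p]} {m i k₀ b : ℕ}

lemma norm_prod_div_factorial_pow (hip : i < p) :
    ‖(∏ j ∈ range m, (ascPochhammer ℚ_[p] i).eval (s j)) / (i ! : ℚ_[p]) ^ m‖ =
      ∏ j ∈ range m, ‖(ascPochhammer ℚ_[p] i).eval (s j)‖ := by
  rw [norm_div, norm_pow, norm_factorial_eq_one hip, one_pow, div_one, norm_prod]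

lemma norm_prod_div_factorial_pow_le_one (hs : ∀ j < m, ‖s j‖ ≤ 1) (hip : i < p) :
    ‖(∏ j ∈ range m, (ascPochhammer ℚ_[p] i).eval (s j)) / (i ! : ℚ_[p]) ^ m‖ ≤ 1 := by
  rw [norm_prod_div_factorial_pow hip]
  exact prod_le_one (fun _ _ => norm_nonneg _) fun j hj =>
    norm_ascPochhammer_eval_le_one (hs j (mem_range.1 hj)) i

lemma norm_prod_div_factorial_pow_le_inv {l c : ℕ} (hs : ∀ j < m, ‖s j‖ ≤ 1) (hl : l < m)
    (hsl : (p - 1) * s l = c) (hci : c < i) (hip : i < p) :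
    ‖(∏ j ∈ range m, (ascPochhammer ℚ_[p] i).eval (s j)) / (i ! : ℚ_[p]) ^ m‖ ≤ (p : ℝ)⁻¹ := by
  rw [norm_prod_div_factorial_pow hip, ← mul_prod_erase _ _ (mem_range.2 hl)]
  refine (mul_le_of_le_one_right (norm_nonneg _) ?_).trans (norm_ascPochhammer_eval_le_inv hsl hci)
  exact prod_le_one (fun _ _ => norm_nonneg _) fun j hj =>
    norm_ascPochhammer_eval_le_one (hs j (mem_range.1 (mem_of_mem_erase hj))) i

lemma norm_hypergeomTerm_shift_le_one (hx : (p - 1) * x = k₀) (hq : (p - 1) * q = b)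
    (hk₀b : k₀ < b) (hbp : b < p) (hs : ∀ j < m, ‖s j‖ ≤ 1) (hik₀ : i ≤ k₀) :
    ‖hypergeomTerm ((1 - p) * x) (q - p * x) s m i‖ ≤ 1 := by
  have hxn := norm_le_one_of_sub_one_mul_eq_natCast hx
  rw [hypergeomTerm, norm_mul, norm_div,
    norm_ascPochhammer_eval_sub_p_mul_eq_one hxn hq hbp (by omega), div_one,
    show (1 - (p : ℚ_[p])) * x = x - p * x by ring]
  exact mul_le_one₀ (norm_ascPochhammer_eval_le_one (norm_sub_p_mul_le_one hxn hxn) i)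
    (norm_nonneg _) (norm_prod_div_factorial_pow_le_one hs (by omega))

lemma norm_hypergeomTerm_shift_sub_le (hx : (p - 1) * x = k₀) (hq : (p - 1) * q = b)
    (hk₀b : k₀ < b) (hbp : b < p) (hs : ∀ j < m, ‖s j‖ ≤ 1) (hik₀ : i ≤ k₀) :
    ‖hypergeomTerm ((1 - p) * x) (q - p * x) s m i - hypergeomTerm x q s m i‖ ≤ (p : ℝ)⁻¹ := by
  have hxn := norm_le_one_of_sub_one_mul_eq_natCast hx
  rw [hypergeomTerm, hypergeomTerm, ← sub_mul, norm_mul,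
    show (1 - (p : ℚ_[p])) * x = x - p * x by ring]
  refine (mul_le_of_le_one_right (norm_nonneg _)
    (norm_prod_div_factorial_pow_le_one hs (by omega))).trans ?_
  refine norm_div_sub_div_le (norm_ascPochhammer_eval_le_one hxn i)
    (norm_ascPochhammer_eval_sub_p_mul_eq_one hxn hq hbp (by omega))
    (norm_ascPochhammer_eval_eq_one_of_le hq hbp (by omega))
    (norm_ascPochhammer_eval_sub_p_mul_sub_le hxn hxn i)
    (norm_ascPochhammer_eval_sub_p_mul_sub_le hxn (norm_le_one_of_sub_one_mul_eq_natCast hq) i)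

lemma norm_hypergeomTerm_le_inv {l j₁ : ℕ} (hx : (p - 1) * x = k₀) (hq : (p - 1) * q = b)
    (hbp : b < p) (hs : ∀ j < m, ‖s j‖ ≤ 1) (hl : l < m)
    (hsl : (p - 1) * s l = j₁) (hj₁b : j₁ < b) (hk₀i : k₀ < i) (hip : i < p) :
    ‖hypergeomTerm x q s m i‖ ≤ (p : ℝ)⁻¹ := by
  have hnum := norm_ascPochhammer_eval_le_inv hx hk₀i
  rw [hypergeomTerm, norm_mul, norm_div]
  rcases le_or_gt i b with hib | hbi
  · -- the denominator is a unit and the numerator is divisible by `p`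
    rw [norm_ascPochhammer_eval_eq_one_of_le hq hbp hib, div_one]
    exact (mul_le_of_le_one_right (norm_nonneg _)
      (norm_prod_div_factorial_pow_le_one hs hip)).trans hnum
  · -- one factor `p` in the denominator, one in the numerator and one in `(s l)_i`
    rw [norm_ascPochhammer_eval_eq_inv_of_lt hq (by omega) hbi hip.le]
    refine (mul_le_of_le_one_left (norm_nonneg _) ?_).trans
      (norm_prod_div_factorial_pow_le_inv hs hl hsl (by omega) hip)
    exact div_le_one_of_le₀ hnum (by positivity)

lemma norm_hypergeomTerm_le_one {l j₁ : ℕ} (hx : (p - 1) * x = k₀) (hq : (p - 1) * q = b)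
    (hk₀b : k₀ < b) (hbp : b < p) (hs : ∀ j < m, ‖s j‖ ≤ 1) (hl : l < m)
    (hsl : (p - 1) * s l = j₁) (hj₁b : j₁ < b) (hip : i < p) :
    ‖hypergeomTerm x q s m i‖ ≤ 1 := by
  rcases le_or_gt i k₀ with hik₀ | hk₀i
  · rw [hypergeomTerm, norm_mul, norm_div, norm_ascPochhammer_eval_eq_one_of_le hq hbp (by omega),
      div_one]
    exact mul_le_one₀ (norm_ascPochhammer_eval_le_one (norm_le_one_of_sub_one_mul_eq_natCast hx) i)
      (norm_nonneg _) (norm_prod_div_factorial_pow_le_one hs hip)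
  · exact (norm_hypergeomTerm_le_inv hx hq hbp hs hl hsl hj₁b hk₀i hip).trans
      inv_p_lt_one.le

theorem norm_sum_hypergeomTerm_shift_le_one (hx : (p - 1) * x = k₀) (hq : (p - 1) * q = b)
    (hk₀b : k₀ < b) (hbp : b < p) (hs : ∀ j < m, ‖s j‖ ≤ 1) :
    ‖∑ i ∈ range (k₀ + 1), hypergeomTerm ((1 - p) * x) (q - p * x) s m i‖ ≤ 1 :=
  norm_sum_le_of_forall_le_of_nonneg zero_le_one fun _ hi =>
    norm_hypergeomTerm_shift_le_one hx hq hk₀b hbp hs (Nat.lt_succ_iff.1 (mem_range.1 hi))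

theorem norm_sum_hypergeomTerm_le_one {l j₁ : ℕ} (hx : (p - 1) * x = k₀)
    (hq : (p - 1) * q = b) (hk₀b : k₀ < b) (hbp : b < p) (hs : ∀ j < m, ‖s j‖ ≤ 1)
    (hl : l < m) (hsl : (p - 1) * s l = j₁) (hj₁b : j₁ < b) :
    ‖∑ i ∈ range p, hypergeomTerm x q s m i‖ ≤ 1 :=
  norm_sum_le_of_forall_le_of_nonneg zero_le_one fun _ hi =>
    norm_hypergeomTerm_le_one hx hq hk₀b hbp hs hl hsl hj₁b (mem_range.1 hi)

theorem norm_sum_hypergeomTerm_shift_sub_le {l j₁ : ℕ} (hx : (p - 1) * x = k₀)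
    (hq : (p - 1) * q = b) (hk₀b : k₀ < b) (hbp : b < p) (hs : ∀ j < m, ‖s j‖ ≤ 1)
    (hl : l < m) (hsl : (p - 1) * s l = j₁) (hj₁b : j₁ < b) :
    ‖∑ i ∈ range (k₀ + 1), hypergeomTerm ((1 - p) * x) (q - p * x) s m i -
        ∑ i ∈ range p, hypergeomTerm x q s m i‖ ≤ (p : ℝ)⁻¹ := by
  rw [← sum_range_add_sum_Ico _ (show k₀ + 1 ≤ p by omega), ← sub_sub, ← sum_sub_distrib,
    sub_eq_add_neg, ← sum_neg_distrib]
  refine (norm_add_le_max _ _).trans (max_le ?_ ?_) <;>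
    refine norm_sum_le_of_forall_le_of_nonneg (by positivity) fun i hi => ?_
  · exact norm_hypergeomTerm_shift_sub_le hx hq hk₀b hbp hs
      (Nat.lt_succ_iff.1 (mem_range.1 hi))
  · rw [norm_neg]
    exact norm_hypergeomTerm_le_inv hx hq hbp hs hl hsl hj₁b (mem_Ico.1 hi).1
      (mem_Ico.1 hi).2

end HypergeomTerm

lemma exists_sub_one_mul_eq_natCast {M p : ℕ} (hp : 0 < p) (hpM : p ≡ 1 [MOD M]) {y : ℚ}
    (hy : 0 ≤ y) (hMy : ∃ z : ℤ, (M : ℚ) * y = z) : ∃ c : ℕ, ((p : ℚ) - 1) * y = c := by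
  obtain ⟨t, ht⟩ := (Nat.modEq_iff_dvd' hp).1 hpM.symm
  obtain ⟨z, hz⟩ := hMy
  lift z to ℕ using (by exact_mod_cast hz ▸ mul_nonneg (Nat.cast_nonneg M) hy)
  refine ⟨z * t, ?_⟩
  push_cast at hz ⊢
  rw [← Nat.cast_pred hp, ht, ← hz]
  push_cast
  ring

theorem truncated_sum_congr_general (n : ℕ) (hn : n = 3 ∨ n = 4) (r : ℕ → ℚ) (rn qn : ℚ)
    (hr_pos : ∀ i, i < n - 1 → 0 < r i)
    (hrn0 : 0 < rn) (hrnqn : rn < qn) (hqn1 : qn ≤ 1) (hr2qn : r 1 < qn)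
    (M : ℕ)
    (hMr : ∀ i, i < n - 1 → ∃ z : ℤ, (M : ℚ) * r i = (z : ℚ))
    (hMqn : ∃ z : ℤ, (M : ℚ) * qn = (z : ℚ))
    (p : ℕ) [Fact (Nat.Prime p)] (hpM : p ≡ 1 [MOD M])
    (k0 : ℕ) (hk0 : (k0 : ℚ) = ((p : ℚ) - 1) * rn) :
    ‖(((∑ i ∈ Finset.range (k0 + 1),
          (poch ((1 - (p : ℚ)) * rn) i * ∏ j ∈ Finset.range (n - 1), poch (r j) i) /
            (poch (qn - (p : ℚ) * rn) i * ((i.factorial : ℚ)) ^ (n - 1)) : ℚ)) : ℚ_[p])‖ ≤ 1 ∧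
    ‖(((∑ i ∈ Finset.range p,
          (poch rn i * ∏ j ∈ Finset.range (n - 1), poch (r j) i) /
            (poch qn i * ((i.factorial : ℚ)) ^ (n - 1)) : ℚ)) : ℚ_[p])‖ ≤ 1 ∧
    ∃ c : ℤ_[p],
      (((∑ i ∈ Finset.range (k0 + 1),
            (poch ((1 - (p : ℚ)) * rn) i * ∏ j ∈ Finset.range (n - 1), poch (r j) i) /
              (poch (qn - (p : ℚ) * rn) i * ((i.factorial : ℚ)) ^ (n - 1))
          - ∑ i ∈ Finset.range p,
              (poch rn i * ∏ j ∈ Finset.range (n - 1), poch (r j) i) /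
                (poch qn i * ((i.factorial : ℚ)) ^ (n - 1)) : ℚ)) : ℚ_[p])
        = (p : ℚ_[p]) * (c : ℚ_[p]) := by
  have hp : p.Prime := Fact.out
  have hm : 1 < n - 1 := by omega
  have hcast {y : ℚ} {c : ℕ} (h : ((p : ℚ) - 1) * y = c) :
      ((p : ℚ_[p]) - 1) * (y : ℚ_[p]) = c := by
    exact_mod_cast h
  obtain ⟨b, hb⟩ := exists_sub_one_mul_eq_natCast hp.pos hpM (hrn0.trans hrnqn).le hMqn
  obtain ⟨j₁, hj₁⟩ := exists_sub_one_mul_eq_natCast hp.pos hpM (hr_pos 1 hm).le (hMr 1 hm)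
  have hs (j : ℕ) (hj : j < n - 1) : ‖(r j : ℚ_[p])‖ ≤ 1 := by
    obtain ⟨c, hc⟩ := exists_sub_one_mul_eq_natCast hp.pos hpM (hr_pos j hj).le (hMr j hj)
    exact norm_le_one_of_sub_one_mul_eq_natCast (hcast hc)
  have hp1 : (1 : ℚ) ≤ p - 1 := by
    have : (2 : ℚ) ≤ p := by exact_mod_cast hp.two_le
    linarith
  have hk₀b : k0 < b := by exact_mod_cast (show (k0 : ℚ) < b by rw [hk0, ← hb]; gcongr)
  have hj₁b : j₁ < b := by exact_mod_cast (show (j₁ : ℚ) < b by rw [← hj₁, ← hb]; gcongr)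
  have hbp : b < p := by exact_mod_cast (show (b : ℚ) < p by rw [← hb]; nlinarith)
  have hx := hcast hk0.symm
  have hq := hcast hb
  have hsl := hcast hj₁
  simp only [ratCast_sum_eq_sum_hypergeomTerm, Rat.cast_sub]
  push_cast
  exact ⟨norm_sum_hypergeomTerm_shift_le_one hx hq hk₀b hbp hs,
    norm_sum_hypergeomTerm_le_one hx hq hk₀b hbp hs hm hsl hj₁b,
    exists_eq_p_mul_of_norm_le_inv
      (norm_sum_hypergeomTerm_shift_sub_le hx hq hk₀b hbp hs hm hsl hj₁b)⟩

/-- Let `n ∈ {3,4}`, `0 < r₁ ≤ ⋯ ≤ r_{n−1} < 1` (here `r 0,…,r (n-2)`),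
`0 < rₙ < qₙ ≤ 1` with `r₂ < qₙ`.  Let `M` be a common denominator of all parameters, let
`p ≡ 1 (mod M)` be prime, and `k₀ := (p−1)rₙ` (a positive integer).  Then both of the sums
`S₁ = Σ_{i=0}^{k₀} [((1−p)rₙ)_i·(r₁)_i⋯(r_{n−1})_i]/[(qₙ−p·rₙ)_i·(i!)^{n−1}]` and
`S₂ = Σ_{i=0}^{p−1} [(rₙ)_i·(r₁)_i⋯(r_{n−1})_i]/[(qₙ)_i·(i!)^{n−1}]` are `p`-adic integers,
and `S₁ ≡ S₂ (mod p·ℤ_p)`. -/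
theorem truncated_sum_congr (n : ℕ) (hn : n = 3 ∨ n = 4) (r : ℕ → ℚ) (rn qn : ℚ)
    (hr_pos : ∀ i, i < n - 1 → 0 < r i) (hr_lt : ∀ i, i < n - 1 → r i < 1)
    (hr_mono : ∀ i j, i ≤ j → j < n - 1 → r i ≤ r j)
    (hrn0 : 0 < rn) (hrnqn : rn < qn) (hqn1 : qn ≤ 1) (hr2qn : r 1 < qn)
    (M : ℕ) (hM : 0 < M)
    (hMr : ∀ i, i < n - 1 → ∃ z : ℤ, (M : ℚ) * r i = (z : ℚ))
    (hMrn : ∃ z : ℤ, (M : ℚ) * rn = (z : ℚ)) (hMqn : ∃ z : ℤ, (M : ℚ) * qn = (z : ℚ))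
    (p : ℕ) [Fact (Nat.Prime p)] (hpM : p ≡ 1 [MOD M])
    (k0 : ℕ) (hk0 : (k0 : ℚ) = ((p : ℚ) - 1) * rn) :
    ‖(((∑ i ∈ Finset.range (k0 + 1),
          (poch ((1 - (p : ℚ)) * rn) i * ∏ j ∈ Finset.range (n - 1), poch (r j) i) /
            (poch (qn - (p : ℚ) * rn) i * ((i.factorial : ℚ)) ^ (n - 1)) : ℚ)) : ℚ_[p])‖ ≤ 1 ∧
    ‖(((∑ i ∈ Finset.range p,
          (poch rn i * ∏ j ∈ Finset.range (n - 1), poch (r j) i) /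
            (poch qn i * ((i.factorial : ℚ)) ^ (n - 1)) : ℚ)) : ℚ_[p])‖ ≤ 1 ∧
    ∃ c : ℤ_[p],
      (((∑ i ∈ Finset.range (k0 + 1),
            (poch ((1 - (p : ℚ)) * rn) i * ∏ j ∈ Finset.range (n - 1), poch (r j) i) /
              (poch (qn - (p : ℚ) * rn) i * ((i.factorial : ℚ)) ^ (n - 1))
          - ∑ i ∈ Finset.range p,
              (poch rn i * ∏ j ∈ Finset.range (n - 1), poch (r j) i) /
                (poch qn i * ((i.factorial : ℚ)) ^ (n - 1)) : ℚ)) : ℚ_[p])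
        = (p : ℚ_[p]) * (c : ℚ_[p]) :=
  truncated_sum_congr_general n hn r rn qn hr_pos hrn0 hrnqn hqn1 hr2qn M hMr hMqn p hpM k0 hk0
end
end

section
/- Assume the standing hypotheses on (α,β) and p. Then the p-adic valuation of the rational number A_k := (r₁)_k⋯(r_n)_k/((q₁)_k⋯(q_n)_k) satisfies: v_p(A_k) = 0 for 0 ≤ k ≤ a₁; v_p(A_k) = 1 for a₁ < k ≤ a₂; and v_p(A_k) ≥ 2 for a₂ < k ≤ p−1. -/
open scoped BigOperators

noncomputable section

/-- The `k`-th hypergeometric coefficient `A_k` of the datum `(α,β)` of length `n`. -/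
def hgCoeff (n : ℕ) (r q : ℕ → ℚ) (k : ℕ) : ℚ :=
  (∏ i ∈ Finset.range n, poch (r i) k) / (∏ i ∈ Finset.range n, poch (q i) k)

lemma poch_pos {r : ℚ} (hr : 0 < r) (k : ℕ) : 0 < poch r k := by
  induction k with
  | zero => simp [poch]
  | succ k ih =>
    rw [poch, ascPochhammer_succ_eval]
    exact mul_pos ih (by positivity)

lemma padicValRat_prod (p : ℕ) [hp : Fact p.Prime] {ι : Type*} (s : Finset ι) (f : ι → ℚ)
    (hf : ∀ i ∈ s, f i ≠ 0) :
    padicValRat p (∏ i ∈ s, f i) = ∑ i ∈ s, padicValRat p (f i) := by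
  classical
  induction s using Finset.cons_induction with
  | empty => simp
  | cons a s ha ih =>
    rw [Finset.prod_cons, Finset.sum_cons,
      padicValRat.mul (hf a (by simp))
        (Finset.prod_ne_zero_iff.mpr (fun i hi => hf i (by simp [hi]))),
      ih (fun i hi => hf i (by simp [hi]))]

lemma factor_val (p : ℕ) [hp : Fact p.Prime] (a j : ℕ) (ha1 : 1 ≤ a) (hap : a ≤ p - 1)
    (hj : j < p - 1) (r : ℚ) (hr : (a : ℚ) = ((p : ℚ) - 1) * r) :
    padicValRat p (r + j) = if j = a then 1 else 0 := by
  have hp2 : 2 ≤ p := hp.out.two_le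
  have hD : ((p - 1 : ℕ) : ℚ) = (p : ℚ) - 1 := by
    push_cast [Nat.cast_sub hp.out.one_le]; ring
  have hDne : ((p - 1 : ℕ) : ℚ) ≠ 0 := by
    rw [hD]
    have : (1:ℚ) < p := by exact_mod_cast hp.out.one_lt
    linarith
  have hNq : ((a + j * (p - 1) : ℕ) : ℚ) = ((p - 1 : ℕ) : ℚ) * (r + j) := by
    push_cast
    rw [hD, hr]; ring
  have hNne : ((a + j * (p - 1) : ℕ) : ℚ) ≠ 0 := by
    have : (0:ℕ) < a + j * (p-1) := by omega
    exact_mod_cast this.ne'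
  have hrj : r + (j : ℚ) = ((a + j * (p - 1) : ℕ) : ℚ) / ((p - 1 : ℕ) : ℚ) := by
    rw [hNq]
    exact (mul_div_cancel_left₀ _ hDne).symm
  rw [hrj, padicValRat.div hNne hDne, padicValRat.of_nat, padicValRat.of_nat]
  have hDval : padicValNat p (p - 1) = 0 := by
    apply padicValNat.eq_zero_of_not_dvd
    intro h
    have := Nat.le_of_dvd (by omega) h
    omega
  rw [hDval]
  by_cases hja : j = a
  · subst hja
    have : j + j * (p - 1) = j * p := by
      obtain ⟨c, rfl⟩ : ∃ c, p = c + 1 := ⟨p - 1, by omega⟩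
      simp only [Nat.add_sub_cancel]
      ring
    rw [this, padicValNat.mul (by omega) (by omega), padicValNat.self hp.out.one_lt,
      padicValNat.eq_zero_of_not_dvd (by intro h; have := Nat.le_of_dvd (by omega) h; omega)]
    simp
  · rw [padicValNat.eq_zero_of_not_dvd]
    · simp [hja]
    · intro h
      have hz : ((a + j * (p - 1) : ℕ) : ZMod p) = 0 := by
        exact_mod_cast (ZMod.natCast_eq_zero_iff _ p).mpr h
      have hpz : ((p : ℕ) : ZMod p) = 0 := ZMod.natCast_self p
      have : ((a : ℕ) : ZMod p) = ((j : ℕ) : ZMod p) := by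
        push_cast [Nat.cast_sub hp.out.one_le] at hz
        rw [hpz] at hz
        linear_combination hz
      have ha' : a < p := by omega
      have hj' : j < p := by omega
      have := congrArg ZMod.val this
      rw [ZMod.val_cast_of_lt ha', ZMod.val_cast_of_lt hj'] at this
      omega

lemma poch_val (p : ℕ) [hp : Fact p.Prime] (a : ℕ) (ha1 : 1 ≤ a) (hap : a ≤ p - 1)
    (r : ℚ) (hr : (a : ℚ) = ((p : ℚ) - 1) * r) (k : ℕ) (hk : k ≤ p - 1) :
    padicValRat p (poch r k) = if a < k then 1 else 0 := by
  have hp2 : 2 ≤ p := hp.out.two_le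
  have hrpos : 0 < r := by
    have h1 : (0:ℚ) < (a:ℚ) := by exact_mod_cast ha1
    have h2 : (0:ℚ) < (p:ℚ) - 1 := by
      have : (1:ℚ) < p := by exact_mod_cast hp.out.one_lt
      linarith
    nlinarith [hr]
  induction k with
  | zero => simp [poch]
  | succ k ih =>
    have hk' : k < p - 1 := by omega
    simp only [poch]
    rw [ascPochhammer_succ_eval]
    have hpk : Polynomial.eval r (ascPochhammer ℚ k) = poch r k := rfl
    rw [hpk, padicValRat.mul (ne_of_gt (poch_pos hrpos k))
        (ne_of_gt (add_pos_of_pos_of_nonneg hrpos (Nat.cast_nonneg k))),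
      ih (by omega), factor_val p a k ha1 hap hk' r hr]
    split_ifs <;> omega

/-- Under the standing hypotheses on `(α,β)` and `p ≡ 1 (mod M)`, with
`aᵢ := rᵢ(p−1)` (so `a 0 = a₁`, `a 1 = a₂` in the 1-based notation of the paper), the `p`-adic
valuation of `A_k` is `0` for `0 ≤ k ≤ a₁`, is `1` for `a₁ < k ≤ a₂`, and is `≥ 2` for
`a₂ < k ≤ p − 1`. -/
theorem hypergeometric_coeff_valuation
    (n : ℕ) (hn : 2 ≤ n)
    (r q : ℕ → ℚ)
    (hr_pos : ∀ i, i < n → 0 < r i) (hr_lt : ∀ i, i < n → r i < 1)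
    (hr_mono : ∀ i j, i ≤ j → j < n → r i ≤ r j)
    (hq_pos : ∀ i, i < n → 0 < q i)
    (hq_mono : ∀ i j, i ≤ j → j < n → q i ≤ q j)
    (hq_top : q (n - 1) = 1) (hq_top' : q (n - 2) = 1)
    (hqr : ∀ j, j + 2 < n → r (j + 2) < q j)
    (hprim : ∀ i, i < n → ∀ j, j < n → ∀ z : ℤ, r i - q j ≠ (z : ℚ))
    (M : ℕ) (hM : 0 < M)
    (hMr : ∀ i, i < n → ∃ z : ℤ, (M : ℚ) * r i = (z : ℚ))
    (hMq : ∀ i, i < n → ∃ z : ℤ, (M : ℚ) * q i = (z : ℚ))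
    (p : ℕ) [Fact (Nat.Prime p)] (hpM : p ≡ 1 [MOD M])
    (a b : ℕ → ℕ)
    (ha : ∀ i, i < n → (a i : ℚ) = ((p : ℚ) - 1) * r i)
    (hb : ∀ i, i < n → (b i : ℚ) = ((p : ℚ) - 1) * q i) :
    (∀ k, k ≤ a 0 → padicValRat p (hgCoeff n r q k) = 0) ∧
      (∀ k, a 0 < k → k ≤ a 1 → padicValRat p (hgCoeff n r q k) = 1) ∧
      (∀ k, a 1 < k → k ≤ p - 1 → 2 ≤ padicValRat p (hgCoeff n r q k)) := by
  have hp2 : 2 ≤ p := (Fact.out : Nat.Prime p).two_le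
  have hppos : (0:ℚ) < (p:ℚ) - 1 := by
    have : (2:ℚ) ≤ (p:ℚ) := by exact_mod_cast hp2
    linarith
  have hD : ((p - 1 : ℕ) : ℚ) = (p : ℚ) - 1 := by
    push_cast [Nat.cast_sub (by omega : 1 ≤ p)]; ring
  have hq1 : ∀ i, i < n → q i ≤ 1 := fun i hi =>
    hq_top ▸ hq_mono i (n - 1) (by omega) (by omega)
  have ha1 : ∀ i, i < n → 1 ≤ a i := by
    intro i hi
    have h : (0:ℚ) < (a i : ℚ) := ha i hi ▸ mul_pos hppos (hr_pos i hi)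
    have : 0 < a i := by exact_mod_cast h
    omega
  have ha_ub : ∀ i, i < n → a i ≤ p - 1 := by
    intro i hi
    have h : (a i : ℚ) < ((p - 1 : ℕ) : ℚ) := by
      rw [ha i hi, hD]
      nlinarith [hr_lt i hi, hr_pos i hi]
    have : a i < p - 1 := by exact_mod_cast h
    omega
  have hb1 : ∀ i, i < n → 1 ≤ b i := by
    intro i hi
    have h : (0:ℚ) < (b i : ℚ) := hb i hi ▸ mul_pos hppos (hq_pos i hi)
    have : 0 < b i := by exact_mod_cast h
    omega
  have hb_ub : ∀ i, i < n → b i ≤ p - 1 := by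
    intro i hi
    have h : (b i : ℚ) ≤ ((p - 1 : ℕ) : ℚ) := by
      rw [hb i hi, hD]
      nlinarith [hq1 i hi]
    exact_mod_cast h
  have hb_top : ∀ i, n - 2 ≤ i → i < n → b i = p - 1 := by
    intro i h1 h2
    have hqi : q i = 1 := by
      rcases (by omega : i = n - 1 ∨ i = n - 2) with h | h
      · rw [h]; exact hq_top
      · rw [h]; exact hq_top'
    have : (b i : ℚ) = ((p - 1 : ℕ) : ℚ) := by rw [hb i h2, hqi, hD, mul_one]
    exact_mod_cast this
  have hamono : ∀ i j, i ≤ j → j < n → a i ≤ a j := by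
    intro i j hij hj
    have h : (a i : ℚ) ≤ (a j : ℚ) := by
      rw [ha i (by omega), ha j hj]
      exact mul_le_mul_of_nonneg_left (hr_mono i j hij hj) hppos.le
    exact_mod_cast h
  have hab : ∀ j, j + 2 < n → a (j + 2) < b j := by
    intro j hj
    have h : (a (j + 2) : ℚ) < (b j : ℚ) := by
      rw [ha (j + 2) hj, hb j (by omega)]
      exact mul_lt_mul_of_pos_left (hqr j hj) hppos
    exact_mod_cast h
  have hba1 : ∀ j, j < n → a 1 ≤ b j := by
    intro j hj
    by_cases h : j + 2 < n
    · exact le_of_lt (lt_of_le_of_lt (hamono 1 (j + 2) (by omega) h) (hab j h))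
    · rw [hb_top j (by omega) hj]
      exact ha_ub 1 (by omega)
  have key : ∀ k, k ≤ p - 1 → padicValRat p (hgCoeff n r q k) =
      (∑ i ∈ Finset.range n, if a i < k then (1:ℤ) else 0) -
      (∑ i ∈ Finset.range n, if b i < k then (1:ℤ) else 0) := by
    intro k hk
    have hPne : ∀ i ∈ Finset.range n, poch (r i) k ≠ 0 := fun i hi =>
      ne_of_gt (poch_pos (hr_pos i (Finset.mem_range.mp hi)) k)
    have hQne : ∀ i ∈ Finset.range n, poch (q i) k ≠ 0 := fun i hi =>
      ne_of_gt (poch_pos (hq_pos i (Finset.mem_range.mp hi)) k)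
    rw [hgCoeff,
      padicValRat.div (Finset.prod_ne_zero_iff.mpr hPne) (Finset.prod_ne_zero_iff.mpr hQne),
      padicValRat_prod p _ _ hPne, padicValRat_prod p _ _ hQne]
    congr 1
    · refine Finset.sum_congr rfl fun i hi => ?_
      have hi' := Finset.mem_range.mp hi
      exact poch_val p (a i) (ha1 i hi') (ha_ub i hi') (r i) (ha i hi') k hk
    · refine Finset.sum_congr rfl fun i hi => ?_
      have hi' := Finset.mem_range.mp hi
      exact poch_val p (b i) (hb1 i hi') (hb_ub i hi') (q i) (hb i hi') k hk
  refine ⟨?_, ?_, ?_⟩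
  · intro k hk
    have hk' : k ≤ p - 1 := le_trans hk (ha_ub 0 (by omega))
    have h1 : (∑ i ∈ Finset.range n, if a i < k then (1:ℤ) else 0) = 0 :=
      Finset.sum_eq_zero fun i hi => if_neg (by
        have := hamono 0 i (by omega) (Finset.mem_range.mp hi); omega)
    have h2 : (∑ i ∈ Finset.range n, if b i < k then (1:ℤ) else 0) = 0 :=
      Finset.sum_eq_zero fun i hi => if_neg (by
        have h01 := hamono 0 1 (by omega) (by omega)
        have := hba1 i (Finset.mem_range.mp hi); omega)
    rw [key k hk', h1, h2]; ring
  · intro k hk1 hk2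
    have hk' : k ≤ p - 1 := le_trans hk2 (ha_ub 1 (by omega))
    have h1 : (∑ i ∈ Finset.range n, if a i < k then (1:ℤ) else 0) = 1 := by
      have hcg : ∀ i ∈ Finset.range n, (if a i < k then (1:ℤ) else 0) =
          if i = 0 then 1 else 0 := by
        intro i hi
        rcases Nat.eq_zero_or_pos i with rfl | h
        · rw [if_pos hk1, if_pos rfl]
        · have := hamono 1 i h (Finset.mem_range.mp hi)
          rw [if_neg (by omega), if_neg (by omega)]
      rw [Finset.sum_congr rfl hcg, Finset.sum_ite_eq' (Finset.range n) 0 (fun _ => (1:ℤ)),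
        if_pos (Finset.mem_range.mpr (by omega))]
    have h2 : (∑ i ∈ Finset.range n, if b i < k then (1:ℤ) else 0) = 0 :=
      Finset.sum_eq_zero fun i hi => if_neg (by
        have := hba1 i (Finset.mem_range.mp hi); omega)
    rw [key k hk', h1, h2]; ring
  · intro k hk1 hk2
    have hsplit : (∑ i ∈ Finset.range n, if a i < k then (1:ℤ) else 0) =
        ((if a 0 < k then (1:ℤ) else 0) + (if a 1 < k then (1:ℤ) else 0)) +
          ∑ i ∈ Finset.Ico 2 n, (if a i < k then (1:ℤ) else 0) := by
      rw [Finset.range_eq_Ico,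
        ← Finset.sum_Ico_consecutive _ (by omega : 0 ≤ 2) (by omega : 2 ≤ n)]
      congr 1
      rw [Finset.sum_Ico_eq_sum_range,
        show (2:ℕ) - 0 = 2 from rfl, Finset.sum_range_succ, Finset.sum_range_succ,
        Finset.sum_range_zero, zero_add]
    have hf0 : (if a 0 < k then (1:ℤ) else 0) = 1 :=
      if_pos (by have := hamono 0 1 (by omega) (by omega); omega)
    have hf1 : (if a 1 < k then (1:ℤ) else 0) = 1 := if_pos hk1
    have hgb : (∑ i ∈ Finset.range n, if b i < k then (1:ℤ) else 0) ≤
        ∑ i ∈ Finset.Ico 2 n, (if a i < k then (1:ℤ) else 0) := by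
      have step1 : (∑ i ∈ Finset.range n, if b i < k then (1:ℤ) else 0) ≤
          ∑ i ∈ Finset.range n,
            (if i + 2 < n then (if a (i + 2) < k then (1:ℤ) else 0) else 0) := by
        refine Finset.sum_le_sum fun i hi => ?_
        have hi' := Finset.mem_range.mp hi
        by_cases h : i + 2 < n
        · rw [if_pos h]
          have := hab i h
          split_ifs <;> omega
        · rw [if_neg h]
          have hbi : b i = p - 1 := hb_top i (by omega) hi'
          rw [if_neg (by omega)]
      have step2 : (∑ i ∈ Finset.range n,
          (if i + 2 < n then (if a (i + 2) < k then (1:ℤ) else 0) else 0)) =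
          ∑ i ∈ Finset.Ico 2 n, (if a i < k then (1:ℤ) else 0) := by
        rw [← Finset.sum_subset (Finset.range_subset_range.mpr (by omega : n - 2 ≤ n))
          (fun x hx' hx => if_neg (by
            have h1 := Finset.mem_range.mp hx'
            have h2 : ¬ x < n - 2 := fun h => hx (Finset.mem_range.mpr h)
            omega))]
        rw [Finset.sum_Ico_eq_sum_range]
        refine Finset.sum_congr rfl fun i hi => ?_
        have hi' := Finset.mem_range.mp hi
        rw [if_pos (by omega), show i + 2 = 2 + i from by omega]
      exact step2 ▸ step1
    rw [key k hk2, hsplit, hf0, hf1]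
    linarith
end
end

section
/- Assume the standing hypotheses on (α,β) and p, and additionally p > n̂ + 1. For all integers i₀, k₀ with 2 ≤ i₀ ≤ n̂ and 1 ≤ k₀ ≤ p − b_{i₀} − 1, the rational function (−t + k₀ + i₀·p)·R(t) has nonvanishing denominator at t = k₀ + i₀·p (R has at most a simple pole there), and its value C_{i₀,k₀} at t = k₀ + i₀·p is a rational number with p-adic valuation at least 1 (that is, C_{i₀,k₀} ≡ 0 mod p). -/
/-!
Count `p`-adic valuations at `t₀ = k₀ + i₀p`. Each factor of the denominator (without the
vanishing factor `−t + k₀ + i₀p`) is an integer `u + vp` with `|u| < p`, hence a unit unless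
`u = 0`. The only multiples of `p` are `(i₀ + 1)p` in the squared third block and `(i − i₀)p` in
each row `i ∈ S` of the last block, where `S` is the set of rows `i ≠ i₀` with `k₀ + b_i < p`; so
the denominator has valuation exactly `2 + #S`. A numerator row `i` contains a multiple of `p` as
soon as `k₀ + a_i < p`, and the interlacing `r_{i+2} < q_i` guarantees this for the rows `2`, `3`,
`i₀ + 2` and `i + 2` (`i ∈ S`): the numerator has valuation at least `3 + #S`.
-/

open scoped BigOperators
open Polynomial

noncomputable section

/-- The numerator `N(t) = ∏_{i=2}^{n} ∏_{j=0}^{p−aᵢ−2} (t + 1 − rᵢ − p + j)` of the rational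
function `R(t)`, as a polynomial (`r`, `a` are 0-based: `rᵢ = r (i−1)`, `aᵢ = a (i−1)`). -/
def Rnum (n p : ℕ) (r : ℕ → ℚ) (a : ℕ → ℕ) : ℚ[X] :=
  ∏ i ∈ Finset.Icc 2 n, ∏ j ∈ Finset.range (p - a (i - 1) - 1),
    (X + C (1 - r (i - 1) - (p : ℚ) + (j : ℚ)))

/-- The first three blocks of the denominator `D(t)` of `R(t)`:
`∏_{j=0}^{a₁}(t+j)² · ∏_{j=0}^{b₁−a₁−1}(t+a₁+1+j) · ∏_{j=0}^{p−b₁−2}(t+b₁+1+j)²`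
(here `a₁ = a 0`, `b₁ = b 0`). -/
def RdenMain (p a1 b1 : ℕ) : ℚ[X] :=
  (∏ j ∈ Finset.range (a1 + 1), (X + C (j : ℚ)) ^ 2) *
    (∏ j ∈ Finset.range (b1 - a1), (X + C ((a1 : ℚ) + 1 + j))) *
    ∏ j ∈ Finset.range (p - b1 - 1), (X + C ((b1 : ℚ) + 1 + j)) ^ 2

open Finset

namespace Nat

theorem le_of_cast_eq_mul_of_le {x y : ℕ} {c s t : ℚ} (hc : 0 ≤ c) (hx : (x : ℚ) = c * s)
    (hy : (y : ℚ) = c * t) (hst : s ≤ t) : x ≤ y := by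
  exact_mod_cast (hx ▸ hy ▸ mul_le_mul_of_nonneg_left hst hc)

theorem lt_of_cast_eq_mul_of_lt {x y : ℕ} {c s t : ℚ} (hc : 0 < c) (hx : (x : ℚ) = c * s)
    (hy : (y : ℚ) = c * t) (hst : s < t) : x < y := by
  exact_mod_cast (hx ▸ hy ▸ mul_lt_mul_of_pos_left hst hc)

end Nat

theorem add_two_le_of_lt_one {q : ℕ → ℚ} {m n : ℕ} (hq_top : q (n - 1) = 1)
    (hq_top' : q (n - 2) = 1) (hm : 2 ≤ m) (hmn : m ≤ n) (hqm : q (m - 1) < 1) : m + 2 ≤ n := by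
  by_contra!
  obtain h | h : m - 1 = n - 1 ∨ m - 1 = n - 2 := by omega
  · exact hqm.ne (h ▸ hq_top)
  · exact hqm.ne (h ▸ hq_top')

namespace Finset

theorem prod_le_pow_card_filter {ι R : Type*} [CommSemiring R] [PartialOrder R] [IsOrderedRing R]
    {s : Finset ι} {f : ι → R} {c : R} (P : ι → Prop) [DecidablePred P]
    (h0 : ∀ i ∈ s, 0 ≤ f i) (h1 : ∀ i ∈ s, f i ≤ 1) (hc : ∀ i ∈ s, P i → f i ≤ c) :
    ∏ i ∈ s, f i ≤ c ^ #{i ∈ s | P i} :=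
  calc ∏ i ∈ s, f i ≤ ∏ i ∈ s with P i, f i :=
        prod_le_prod_of_subset_of_le_one (filter_subset _ _) h0 fun i hi _ ↦ h1 i hi
    _ ≤ ∏ _j ∈ {i ∈ s | P i}, c := prod_le_prod (fun i hi ↦ h0 i (mem_filter.1 hi).1)
        fun i hi ↦ hc i (mem_filter.1 hi).1 (mem_filter.1 hi).2
    _ = c ^ #{i ∈ s | P i} := prod_const c

theorem three_add_card_filter_le_card_filter {m n i₀ : ℕ} {P Q : ℕ → Prop} [DecidablePred P]
    [DecidablePred Q] (hmn : m + 2 ≤ n) (hi₀ : i₀ ∈ Icc 2 m) (h2 : Q 2) (h3 : Q 3)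
    (hPQ : ∀ i ∈ Icc 2 m, (i = i₀ ∨ P i) → Q (i + 2)) :
    3 + #{i ∈ Icc 2 m | i ≠ i₀ ∧ P i} ≤ #{i ∈ Icc 2 n | Q i} := by
  have hm := mem_Icc.1 hi₀
  set S := {i ∈ Icc 2 m | i ≠ i₀ ∧ P i}
  have hS : ∀ i ∈ insert i₀ S, 2 ≤ i ∧ i ≤ m ∧ Q (i + 2) := by
    intro i hi
    have hi' : i ∈ Icc 2 m ∧ (i = i₀ ∨ P i) := by
      rcases mem_insert.1 hi with rfl | hi
      · exact ⟨hi₀, .inl rfl⟩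
      · exact ⟨(mem_filter.1 hi).1, .inr (mem_filter.1 hi).2.2⟩
    exact ⟨(mem_Icc.1 hi'.1).1, (mem_Icc.1 hi'.1).2, hPQ i hi'.1 hi'.2⟩
  have hcard : #(insert 2 (insert 3 ((insert i₀ S).map (addRightEmbedding 2)))) = 3 + #S := by
    rw [card_insert_of_notMem, card_insert_of_notMem, card_map,
      card_insert_of_notMem (fun h ↦ (mem_filter.1 h).2.1 rfl)]
    · omega
    · simp only [mem_map, addRightEmbedding_apply, not_exists, not_and]
      intro i hi; have := hS i hi; omega
    · simp only [mem_insert, mem_map, addRightEmbedding_apply, not_exists, not_and, not_or]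
      exact ⟨by omega, fun i hi ↦ by have := hS i (mem_insert.2 hi); omega⟩
  rw [← hcard]
  refine card_le_card fun i hi ↦ ?_
  simp only [mem_insert, mem_map, addRightEmbedding_apply] at hi
  rcases hi with rfl | rfl | ⟨i, hi, rfl⟩
  · exact mem_filter.2 ⟨mem_Icc.2 ⟨le_rfl, by omega⟩, h2⟩
  · exact mem_filter.2 ⟨mem_Icc.2 ⟨by omega, by omega⟩, h3⟩
  · have := hS i (mem_insert.2 hi)
    exact mem_filter.2 ⟨mem_Icc.2 ⟨by omega, by omega⟩, this.2.2⟩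

theorem three_add_card_filter_le_of_interlacing {n m i₀ k₀ p : ℕ} {a b : ℕ → ℕ}
    (ha_le : ∀ u v, u ≤ v → v < n → a u ≤ a v) (hab : ∀ i ∈ Icc 2 m, a (i + 1) < b (i - 1))
    (hmn : m + 2 ≤ n) (hi₀ : i₀ ∈ Icc 2 m) (hk₀ : k₀ + b (i₀ - 1) < p) :
    3 + #{i ∈ Icc 2 m | i ≠ i₀ ∧ k₀ + b (i - 1) < p} ≤ #{i ∈ Icc 2 n | k₀ + a (i - 1) < p} := by
  have hi₀' := mem_Icc.1 hi₀
  have := hab i₀ hi₀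
  have := ha_le 1 (i₀ + 1) (by omega) (by omega)
  have := ha_le 2 (i₀ + 1) (by omega) (by omega)
  exact three_add_card_filter_le_card_filter hmn hi₀ (show k₀ + a 1 < p by omega)
    (show k₀ + a 2 < p by omega) fun i hi h ↦ show k₀ + a (i + 1) < p by
      have := hab i hi
      rcases h with rfl | h <;> omega

end Finset

namespace Padic

variable {p : ℕ} [Fact p.Prime]

theorem norm_ratCast_eq_one_of_eq_add_mul {x : ℚ} {u v : ℤ} (hx : x = u + v * p) (hu₀ : u ≠ 0)
    (hu : |u| < p) : ‖(x : ℚ_[p])‖ = 1 := by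
  have hx' : (x : ℚ_[p]) = ((u + v * p : ℤ) : ℚ_[p]) := by rw [hx]; push_cast; rfl
  rw [hx']
  refine le_antisymm (norm_int_le_one _) (not_lt.1 fun h ↦ hu₀ ?_)
  rw [norm_intCast_lt_one_iff] at h
  exact Int.eq_zero_of_abs_lt_dvd ((Int.dvd_add_left (dvd_mul_left _ v)).1 h) hu

theorem norm_ratCast_eq_inv_of_eq_mul {x : ℚ} {v : ℤ} (hx : x = v * p) (hv₀ : v ≠ 0)
    (hv : |v| < p) : ‖(x : ℚ_[p])‖ = (p : ℝ)⁻¹ := by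
  rw [hx, Rat.cast_mul, norm_mul, Rat.cast_natCast, norm_p,
    norm_ratCast_eq_one_of_eq_add_mul (v := 0) (by simp) hv₀ hv, one_mul]

theorem norm_ratCast_eq_of_pred_mul_eq {x : ℚ} {m : ℤ} (h : (p - 1) * x = m) :
    ‖(x : ℚ_[p])‖ = ‖(m : ℚ_[p])‖ := by
  have hp : (1 : ℤ) < p := by exact_mod_cast (Fact.out : p.Prime).one_lt
  have hunit : ‖(((p : ℚ) - 1 : ℚ) : ℚ_[p])‖ = 1 :=
    norm_ratCast_eq_one_of_eq_add_mul (u := -1) (v := 1) (by push_cast; ring) (by norm_num)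
      (by rw [abs_neg, abs_one]; exact hp)
  rw [← one_mul ‖(x : ℚ_[p])‖, ← hunit, ← norm_mul, ← Rat.cast_mul, h, Rat.cast_intCast]

theorem exists_eq_p_mul_of_norm_le {x : ℚ_[p]} (hx : ‖x‖ ≤ (p : ℝ)⁻¹) :
    ∃ c : ℤ_[p], x = p * c := by
  have hp : (p : ℚ_[p]) ≠ 0 := Nat.cast_ne_zero.2 (Fact.out : p.Prime).ne_zero
  have hc : ‖x / p‖ ≤ 1 := by
    rw [norm_div, norm_p, div_le_one (by simp [(Fact.out : p.Prime).pos])]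
    exact hx
  exact ⟨⟨x / p, hc⟩, (mul_div_cancel₀ _ hp).symm⟩

end Padic

section Evaluation

variable {p : ℕ} [Fact p.Prime]

theorem norm_eval_RdenMain {a₀ b₀ i₀ k₀ : ℕ} (hk₀ : 1 ≤ k₀) (ha₀ : k₀ + a₀ < p) (hb₀ : k₀ + b₀ < p)
    (hi₀ : i₀ + 1 < p) :
    ‖(((RdenMain p a₀ b₀).eval ((k₀ : ℚ) + i₀ * p) : ℚ) : ℚ_[p])‖ = (p : ℝ)⁻¹ ^ 2 := by
  simp only [RdenMain, eval_mul, eval_prod, eval_pow, eval_add, eval_X, eval_C, Rat.cast_mul,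
    Rat.cast_prod, Rat.cast_pow, norm_mul, norm_prod, norm_pow, prod_pow]
  have h₁ : ∏ j ∈ range (a₀ + 1), ‖(((k₀ : ℚ) + i₀ * p + j : ℚ) : ℚ_[p])‖ = 1 :=
    prod_eq_one fun j hj ↦ Padic.norm_ratCast_eq_one_of_eq_add_mul (u := k₀ + j) (v := i₀)
      (by push_cast; ring) (by omega) (by rw [mem_range] at hj; rw [abs_lt]; omega)
  have h₂ : ∏ j ∈ range (b₀ - a₀), ‖(((k₀ : ℚ) + i₀ * p + (a₀ + 1 + j) : ℚ) : ℚ_[p])‖ = 1 :=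
    prod_eq_one fun j hj ↦ Padic.norm_ratCast_eq_one_of_eq_add_mul (u := k₀ + a₀ + 1 + j)
      (v := i₀) (by push_cast; ring) (by omega) (by rw [mem_range] at hj; rw [abs_lt]; omega)
  -- the only multiple of `p` in the last block is the factor `(i₀ + 1) * p`
  have h₃ : ∏ j ∈ range (p - b₀ - 1), ‖(((k₀ : ℚ) + i₀ * p + (b₀ + 1 + j) : ℚ) : ℚ_[p])‖ =
      (p : ℝ)⁻¹ := by
    obtain ⟨j₀, hj₀⟩ : ∃ j₀, k₀ + b₀ + 1 + j₀ = p := ⟨p - 1 - k₀ - b₀, by omega⟩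
    have hj₀' : (k₀ : ℚ) + b₀ + 1 + j₀ = p := by exact_mod_cast hj₀
    rw [prod_eq_single_of_mem j₀ (mem_range.2 (by omega))]
    · exact Padic.norm_ratCast_eq_inv_of_eq_mul (v := i₀ + 1)
        (by push_cast; linear_combination hj₀') (by omega) (by rw [abs_lt]; omega)
    · intro j hj hj'
      rw [mem_range] at hj
      exact Padic.norm_ratCast_eq_one_of_eq_add_mul (u := k₀ + b₀ + 1 + j - p) (v := i₀ + 1)
        (by push_cast; ring) (by omega) (by rw [abs_lt]; omega)
  rw [h₁, h₂, h₃]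
  ring

theorem norm_eval_prod_filter_shifted {i i₀ k₀ B : ℕ} (hk₀ : 1 ≤ k₀) (hk₀p : k₀ < p)
    (hi : i < p) (hi₀ : i₀ < p) :
    ‖(((∏ j ∈ (Finset.range (p - B - 1)).filter (fun j => ¬(i = i₀ ∧ j = k₀ - 1)),
        (-X + C (1 + (i : ℚ) * p + (j : ℚ)))).eval ((k₀ : ℚ) + i₀ * p) : ℚ) : ℚ_[p])‖ =
      if i ≠ i₀ ∧ k₀ + B < p then (p : ℝ)⁻¹ else 1 := by
  simp only [eval_prod, eval_add, eval_neg, eval_X, eval_C, Rat.cast_prod, norm_prod]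
  have hunit : ∀ j ∈ (range (p - B - 1)).filter (fun j => ¬(i = i₀ ∧ j = k₀ - 1)), j ≠ k₀ - 1 →
      ‖((-((k₀ : ℚ) + i₀ * p) + (1 + i * p + j) : ℚ) : ℚ_[p])‖ = 1 := by
    intro j hj hj'
    rw [mem_filter, mem_range] at hj
    exact Padic.norm_ratCast_eq_one_of_eq_add_mul (u := 1 + j - k₀) (v := i - i₀)
      (by push_cast; ring) (by omega) (by rw [abs_lt]; omega)
  split_ifs with h
  · rw [prod_eq_single_of_mem (k₀ - 1) (mem_filter.2 ⟨mem_range.2 (by omega), by tauto⟩)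
      fun j hj hj' ↦ hunit j hj hj']
    exact Padic.norm_ratCast_eq_inv_of_eq_mul (v := i - i₀)
      (by push_cast [show 1 ≤ k₀ from hk₀]; ring) (by omega) (by rw [abs_lt]; omega)
  · refine prod_eq_one fun j hj ↦ hunit j hj fun hj' ↦ ?_
    rw [mem_filter, mem_range] at hj
    omega

theorem norm_eval_Rnum_le {n : ℕ} {r : ℕ → ℚ} {a : ℕ → ℕ}
    (ha : ∀ i, i < n → (a i : ℚ) = (p - 1) * r i) {i₀ k₀ : ℕ} (hk₀ : 1 ≤ k₀) :
    ‖(((Rnum n p r a).eval ((k₀ : ℚ) + i₀ * p) : ℚ) : ℚ_[p])‖ ≤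
      (p : ℝ)⁻¹ ^ #{i ∈ Icc 2 n | k₀ + a (i - 1) < p} := by
  simp only [Rnum, eval_prod, eval_add, eval_X, eval_C, Rat.cast_prod, norm_prod]
  have hfac : ∀ i ∈ Icc 2 n, ∀ j : ℕ,
      ‖(((k₀ : ℚ) + i₀ * p + (1 - r (i - 1) - p + j) : ℚ) : ℚ_[p])‖ =
        ‖((((p : ℤ) - 1) * (k₀ + i₀ * p + 1 - p + j) - a (i - 1) : ℤ) : ℚ_[p])‖ := by
    intro i hi j
    have := ha (i - 1) (by rw [mem_Icc] at hi; omega)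
    exact Padic.norm_ratCast_eq_of_pred_mul_eq (by push_cast; linear_combination this)
  refine prod_le_pow_card_filter _ (fun i _ ↦ prod_nonneg fun j _ ↦ norm_nonneg _)
    (fun i hi ↦ prod_le_one (fun j _ ↦ norm_nonneg _) fun j _ ↦ by
      rw [hfac i hi]; exact Padic.norm_int_le_one _) fun i hi hka ↦ ?_
  -- the factor at `j₀ = p - 1 - k₀ - aᵢ` is `p * ((p - 1) * i₀ - aᵢ) / (p - 1)`
  obtain ⟨j₀, hj₀⟩ : ∃ j₀, k₀ + a (i - 1) + 1 + j₀ = p := ⟨p - 1 - k₀ - a (i - 1), by omega⟩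
  have hj₀' : ((k₀ + a (i - 1) + 1 + j₀ : ℕ) : ℤ) = p := by rw [hj₀]
  push_cast at hj₀'
  calc _ ≤ ∏ j ∈ {j₀}, ‖(((k₀ : ℚ) + i₀ * p + (1 - r (i - 1) - p + j) : ℚ) : ℚ_[p])‖ :=
        prod_le_prod_of_subset_of_le_one (singleton_subset_iff.2 (mem_range.2 (by omega)))
          (fun j _ ↦ norm_nonneg _) fun j _ _ ↦ by rw [hfac i hi]; exact Padic.norm_int_le_one _
    _ = ‖(((((p : ℤ) - 1) * i₀ - a (i - 1)) * p : ℤ) : ℚ_[p])‖ := by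
        rw [prod_singleton, hfac i hi]
        congr 2
        linear_combination ((p : ℤ) - 1) * hj₀'
    _ ≤ (p : ℝ)⁻¹ := by
        rw [Int.cast_mul, norm_mul, Int.cast_natCast, Padic.norm_p]
        exact mul_le_of_le_one_left (by positivity) (Padic.norm_int_le_one _)

theorem norm_eval_denominator {a₀ b₀ nhat i₀ k₀ : ℕ} {b : ℕ → ℕ} (hk₀ : 1 ≤ k₀)
    (ha₀ : k₀ + a₀ < p) (hb₀ : k₀ + b₀ < p) (hi₀ : i₀ ≤ nhat) (hnhat : nhat + 1 < p) :
    ‖(((RdenMain p a₀ b₀ * ∏ i ∈ Finset.Icc 2 nhat,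
          ∏ j ∈ (Finset.range (p - b (i - 1) - 1)).filter (fun j => ¬(i = i₀ ∧ j = k₀ - 1)),
            (-X + C (1 + (i : ℚ) * p + (j : ℚ)))).eval ((k₀ : ℚ) + i₀ * p) : ℚ) : ℚ_[p])‖ =
      (p : ℝ)⁻¹ ^ (2 + #{i ∈ Icc 2 nhat | i ≠ i₀ ∧ k₀ + b (i - 1) < p}) := by
  rw [eval_mul, Rat.cast_mul, norm_mul, norm_eval_RdenMain hk₀ ha₀ hb₀ (by omega), eval_prod,
    Rat.cast_prod, norm_prod, prod_congr rfl fun i hi ↦ norm_eval_prod_filter_shifted hk₀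
      (by omega) (by rw [mem_Icc] at hi; omega) (by omega), prod_ite, prod_const, prod_const_one,
    mul_one, pow_add]

end Evaluation

theorem residue_Cik_vanishes_mod_p_general
    (n : ℕ)
    (r q : ℕ → ℚ)
    (hr_mono : ∀ i j, i ≤ j → j < n → r i ≤ r j)
    (hq_mono : ∀ i j, i ≤ j → j < n → q i ≤ q j)
    (hq_top : q (n - 1) = 1) (hq_top' : q (n - 2) = 1)
    (hqr : ∀ j, j + 2 < n → r (j + 2) < q j)
    (p : ℕ) [Fact (Nat.Prime p)]
    (a b : ℕ → ℕ)
    (ha : ∀ i, i < n → (a i : ℚ) = ((p : ℚ) - 1) * r i)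
    (hb : ∀ i, i < n → (b i : ℚ) = ((p : ℚ) - 1) * q i)
    (nhat : ℕ) (hnhat_le : nhat ≤ n)
    (hnhat : ∀ i, 2 ≤ i → i ≤ n → (q (i - 1) < 1 ↔ i ≤ nhat))
    (hp_nhat : nhat + 1 < p)
    (i0 k0 : ℕ) (hi0 : 2 ≤ i0) (hi0' : i0 ≤ nhat)
    (hk0 : 1 ≤ k0) (hk0' : k0 ≤ p - b (i0 - 1) - 1) :
    -- the denominator of `(−t + k₀ + i₀p)·R(t)`, i.e. `D(t)` with the factor
    -- `(−t + 1 + i₀p + (k₀−1))` removed, does not vanish at `t = k₀ + i₀p`,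
    (RdenMain p (a 0) (b 0) *
        ∏ i ∈ Finset.Icc 2 nhat,
          ∏ j ∈ (Finset.range (p - b (i - 1) - 1)).filter (fun j => ¬(i = i0 ∧ j = k0 - 1)),
            (-X + C (1 + (i : ℚ) * p + (j : ℚ)))).eval ((k0 : ℚ) + (i0 : ℚ) * p) ≠ 0 ∧
      -- and the value `C_{i₀,k₀}` of `(−t + k₀ + i₀p)·R(t)` at `t = k₀ + i₀p` is `≡ 0 mod p`:
      ∃ c : ℤ_[p],
        (((Rnum n p r a).eval ((k0 : ℚ) + (i0 : ℚ) * p) /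
            (RdenMain p (a 0) (b 0) *
              ∏ i ∈ Finset.Icc 2 nhat,
                ∏ j ∈ (Finset.range (p - b (i - 1) - 1)).filter
                    (fun j => ¬(i = i0 ∧ j = k0 - 1)),
                  (-X + C (1 + (i : ℚ) * p + (j : ℚ)))).eval ((k0 : ℚ) + (i0 : ℚ) * p)
          : ℚ) : ℚ_[p]) = (p : ℚ_[p]) * (c : ℚ_[p]) := by
  have hp₁ : 1 < p := (Fact.out : p.Prime).one_lt
  have hp : (0 : ℚ) < p - 1 := sub_pos.2 (by exact_mod_cast hp₁)
  have hpinv : (0 : ℝ) < (p : ℝ)⁻¹ := inv_pos.2 (by exact_mod_cast hp₁.trans' one_pos)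
  have hnhat_add_two : nhat + 2 ≤ n := add_two_le_of_lt_one hq_top hq_top' (by omega)
    hnhat_le ((hnhat nhat (by omega) hnhat_le).2 le_rfl)
  have ha_le : ∀ u v, u ≤ v → v < n → a u ≤ a v := fun u v huv hv ↦
    Nat.le_of_cast_eq_mul_of_le hp.le (ha u (by omega)) (ha v hv) (hr_mono u v huv hv)
  have hb_le : ∀ u v, u ≤ v → v < n → b u ≤ b v := fun u v huv hv ↦
    Nat.le_of_cast_eq_mul_of_le hp.le (hb u (by omega)) (hb v hv) (hq_mono u v huv hv)
  have hab : ∀ i ∈ Icc 2 nhat, a (i + 1) < b (i - 1) := fun i hi ↦ by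
    rw [mem_Icc] at hi
    refine Nat.lt_of_cast_eq_mul_of_lt hp (ha _ (by omega)) (hb _ (by omega)) ?_
    simpa only [show i - 1 + 2 = i + 1 by omega] using hqr (i - 1) (by omega)
  have hi0mem : i0 ∈ Icc 2 nhat := mem_Icc.2 ⟨hi0, hi0'⟩
  have hk0b : k0 + b (i0 - 1) < p := by omega
  have hden := norm_eval_denominator (a₀ := a 0) (b₀ := b 0) (b := b) hk0
    (by linarith [hab i0 hi0mem, ha_le 0 (i0 + 1) (by omega) (by omega)])
    (by linarith [hb_le 0 (i0 - 1) (by omega) (by omega)]) hi0' hp_nhat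
  refine ⟨fun h ↦ ?_, Padic.exists_eq_p_mul_of_norm_le ?_⟩
  · rw [h, Rat.cast_zero, norm_zero] at hden
    exact (pow_pos hpinv _).ne hden
  rw [Rat.cast_div, norm_div, hden, div_le_iff₀ (pow_pos hpinv _)]
  calc _ ≤ (p : ℝ)⁻¹ ^ #{i ∈ Icc 2 n | k0 + a (i - 1) < p} := norm_eval_Rnum_le ha hk0
    _ ≤ (p : ℝ)⁻¹ ^ (3 + #{i ∈ Icc 2 nhat | i ≠ i0 ∧ k0 + b (i - 1) < p}) :=
        pow_le_pow_of_le_one hpinv.le (inv_le_one_of_one_le₀ (by exact_mod_cast hp₁.le))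
          (three_add_card_filter_le_of_interlacing ha_le hab hnhat_add_two hi0mem hk0b)
    _ = _ := by ring

/-- Under the standing hypotheses on `(α,β)` and `p ≡ 1 (mod M)` with
`p > n̂ + 1`: for `2 ≤ i₀ ≤ n̂` and `1 ≤ k₀ ≤ p − b_{i₀} − 1`, the rational function
`(−t + k₀ + i₀p)·R(t)` has nonvanishing denominator at `t = k₀ + i₀p` (so `R` has at most a
simple pole there), and its value `C_{i₀,k₀}` there satisfies `C_{i₀,k₀} ≡ 0 (mod p)`. -/
theorem residue_Cik_vanishes_mod_p
    (n : ℕ) (hn : 2 ≤ n)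
    (r q : ℕ → ℚ)
    (hr_pos : ∀ i, i < n → 0 < r i) (hr_lt : ∀ i, i < n → r i < 1)
    (hr_mono : ∀ i j, i ≤ j → j < n → r i ≤ r j)
    (hq_pos : ∀ i, i < n → 0 < q i)
    (hq_mono : ∀ i j, i ≤ j → j < n → q i ≤ q j)
    (hq_top : q (n - 1) = 1) (hq_top' : q (n - 2) = 1)
    (hqr : ∀ j, j + 2 < n → r (j + 2) < q j)
    (hprim : ∀ i, i < n → ∀ j, j < n → ∀ z : ℤ, r i - q j ≠ (z : ℚ))
    (M : ℕ) (hM : 0 < M)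
    (hMr : ∀ i, i < n → ∃ z : ℤ, (M : ℚ) * r i = (z : ℚ))
    (hMq : ∀ i, i < n → ∃ z : ℤ, (M : ℚ) * q i = (z : ℚ))
    (p : ℕ) [Fact (Nat.Prime p)] (hpM : p ≡ 1 [MOD M])
    (a b : ℕ → ℕ)
    (ha : ∀ i, i < n → (a i : ℚ) = ((p : ℚ) - 1) * r i)
    (hb : ∀ i, i < n → (b i : ℚ) = ((p : ℚ) - 1) * q i)
    (nhat : ℕ) (hnhat_le : nhat ≤ n) (hnhat0 : nhat = 0 ∨ 2 ≤ nhat)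
    (hnhat : ∀ i, 2 ≤ i → i ≤ n → (q (i - 1) < 1 ↔ i ≤ nhat))
    (hp_nhat : nhat + 1 < p)
    (i0 k0 : ℕ) (hi0 : 2 ≤ i0) (hi0' : i0 ≤ nhat)
    (hk0 : 1 ≤ k0) (hk0' : k0 ≤ p - b (i0 - 1) - 1) :
    -- the denominator of `(−t + k₀ + i₀p)·R(t)`, i.e. `D(t)` with the factor
    -- `(−t + 1 + i₀p + (k₀−1))` removed, does not vanish at `t = k₀ + i₀p`,
    (RdenMain p (a 0) (b 0) *
        ∏ i ∈ Finset.Icc 2 nhat,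
          ∏ j ∈ (Finset.range (p - b (i - 1) - 1)).filter (fun j => ¬(i = i0 ∧ j = k0 - 1)),
            (-X + C (1 + (i : ℚ) * p + (j : ℚ)))).eval ((k0 : ℚ) + (i0 : ℚ) * p) ≠ 0 ∧
      -- and the value `C_{i₀,k₀}` of `(−t + k₀ + i₀p)·R(t)` at `t = k₀ + i₀p` is `≡ 0 mod p`:
      ∃ c : ℤ_[p],
        (((Rnum n p r a).eval ((k0 : ℚ) + (i0 : ℚ) * p) /
            (RdenMain p (a 0) (b 0) *
              ∏ i ∈ Finset.Icc 2 nhat,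
                ∏ j ∈ (Finset.range (p - b (i - 1) - 1)).filter
                    (fun j => ¬(i = i0 ∧ j = k0 - 1)),
                  (-X + C (1 + (i : ℚ) * p + (j : ℚ)))).eval ((k0 : ℚ) + (i0 : ℚ) * p)
          : ℚ) : ℚ_[p]) = (p : ℚ_[p]) * (c : ℚ_[p]) :=
  residue_Cik_vanishes_mod_p_general n r q hr_mono hq_mono hq_top hq_top' hqr p a b ha hb nhat
    hnhat_le hnhat hp_nhat i0 k0 hi0 hi0' hk0 hk0'
end
end

section
/- Assume the standing hypotheses on (α,β) and p, and additionally p > n̂ + 1. For every integer k with b₁ + 1 ≤ k ≤ p − 1, the rational function (t+k)²·R(t) is regular at t = −k (R has a pole of order at most 2 there), and the value B_k at t = −k of its derivative (d/dt)[(t+k)²·R(t)] is a rational number with p-adic valuation at least 1 (that is, B_k ≡ 0 mod p). -/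
/-!
At `t = −k`, every block `i` of `N` with `a_i < k` contains the factor `j = k − a_i − 1`, which
equals `−p(p − 1 + a_i)/(p − 1)` and so is divisible by `p`; all other factors of `N` are
`p`-integral. The only factors of `D₀` divisible by `p` are the `m` factors `(i + 1)p` with
`2 ≤ i ≤ n̂` and `b_i < k`, each exactly once; the rest are `p`-adic units. The interlacing
`r_{i+2} < q_i` turns each such `i` into a block `i + 2` of `N` with `a_{i+2} < k`, and
`a₂ ≤ a₃ < b₁ < k` adds the blocks `2` and `3`. So `N` vanishes `p`-adically to order at least
`m + 2` at `−k` and `D₀` to order exactly `m`: both terms of `N'D₀ − ND₀'` have valuation at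
least `2m + 1`, while `D₀²` has valuation exactly `2m`.
-/

open scoped BigOperators
open Polynomial

noncomputable section

/-- The denominator `D(t)` of `R(t)` with the square factor `(t + b₁ + 1 + j)²` at
`j = k − b₁ − 1` removed; i.e. the denominator of `(t+k)²·R(t)` near `t = −k` for
`b₁ + 1 ≤ k ≤ p − 1`.  Here `a₁ = a 0`, `b₁ = b 0`, `bᵢ = b (i−1)`. -/
def RdenNoK (p nhat : ℕ) (a1 b1 : ℕ) (b : ℕ → ℕ) (k : ℕ) : ℚ[X] :=
  (∏ j ∈ Finset.range (a1 + 1), (X + C (j : ℚ)) ^ 2) *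
    (∏ j ∈ Finset.range (b1 - a1), (X + C ((a1 : ℚ) + 1 + j))) *
    (∏ j ∈ (Finset.range (p - b1 - 1)).filter (fun j => j ≠ k - b1 - 1),
      (X + C ((b1 : ℚ) + 1 + j)) ^ 2) *
    ∏ i ∈ Finset.Icc 2 nhat, ∏ j ∈ Finset.range (p - b (i - 1) - 1),
      (-X + C (1 + (i : ℚ) * p + (j : ℚ)))

namespace Polynomial

variable {F : Type*} [Field F] (abv : AbsoluteValue F ℝ) (ε : ℝ)

/-- First-order data of a polynomial with `e` roots `ε`-close to `x`; the truncated `e - 1`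
makes the derivative bound `1` when `e = 0`. -/
def AbvVanishesTo (f : F[X]) (x : F) (e : ℕ) : Prop :=
  abv (f.eval x) ≤ ε ^ e ∧ abv ((derivative f).eval x) ≤ ε ^ (e - 1)

def AbvVanishesExactlyTo (f : F[X]) (x : F) (e : ℕ) : Prop :=
  abv (f.eval x) = ε ^ e ∧ abv ((derivative f).eval x) ≤ ε ^ (e - 1)

variable {abv ε} {f g : F[X]} {x : F} {e e₁ e₂ : ℕ}

theorem AbvVanishesExactlyTo.abvVanishesTo (h : AbvVanishesExactlyTo abv ε f x e) :
    AbvVanishesTo abv ε f x e :=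
  ⟨h.1.le, h.2⟩

theorem AbvVanishesExactlyTo.eval_ne_zero (hε : ε ≠ 0) (h : AbvVanishesExactlyTo abv ε f x e) :
    f.eval x ≠ 0 := by
  rw [← abv.ne_zero_iff, h.1]
  exact pow_ne_zero e hε

theorem AbvVanishesTo.mono (hε₀ : 0 ≤ ε) (hε₁ : ε ≤ 1) (h : AbvVanishesTo abv ε f x e₁)
    (he : e₂ ≤ e₁) : AbvVanishesTo abv ε f x e₂ :=
  ⟨h.1.trans (pow_le_pow_of_le_one hε₀ hε₁ he),
    h.2.trans (pow_le_pow_of_le_one hε₀ hε₁ (by omega))⟩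

theorem AbvVanishesTo.of_le_one (he : e ≤ 1) (h : abv (f.eval x) ≤ ε ^ e)
    (h' : abv ((derivative f).eval x) ≤ 1) : AbvVanishesTo abv ε f x e :=
  ⟨h, by rwa [Nat.sub_eq_zero_of_le he, pow_zero]⟩

theorem AbvVanishesExactlyTo.of_le_one (he : e ≤ 1) (h : abv (f.eval x) = ε ^ e)
    (h' : abv ((derivative f).eval x) ≤ 1) : AbvVanishesExactlyTo abv ε f x e :=
  ⟨h, by rwa [Nat.sub_eq_zero_of_le he, pow_zero]⟩

theorem abvVanishesExactlyTo_one : AbvVanishesExactlyTo abv ε 1 x 0 := by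
  simp [AbvVanishesExactlyTo]

theorem abvVanishesTo_one : AbvVanishesTo abv ε 1 x 0 :=
  abvVanishesExactlyTo_one.abvVanishesTo

theorem AbvVanishesTo.mul (habv : IsNonarchimedean abv) (hε₀ : 0 ≤ ε) (hε₁ : ε ≤ 1)
    (hf : AbvVanishesTo abv ε f x e₁) (hg : AbvVanishesTo abv ε g x e₂) :
    AbvVanishesTo abv ε (f * g) x (e₁ + e₂) := by
  refine ⟨?_, ?_⟩
  · rw [eval_mul, map_mul, pow_add]
    exact mul_le_mul hf.1 hg.1 (abv.nonneg _) (by positivity)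
  · rw [derivative_mul, eval_add, eval_mul, eval_mul]
    refine (habv _ _).trans (max_le ?_ ?_) <;> rw [map_mul]
    · calc _ ≤ ε ^ (e₁ - 1) * ε ^ e₂ := mul_le_mul hf.2 hg.1 (abv.nonneg _) (by positivity)
        _ ≤ ε ^ (e₁ + e₂ - 1) := by
          rw [← pow_add]; exact pow_le_pow_of_le_one hε₀ hε₁ (by omega)
    · calc _ ≤ ε ^ e₁ * ε ^ (e₂ - 1) := mul_le_mul hf.1 hg.2 (abv.nonneg _) (by positivity)
        _ ≤ ε ^ (e₁ + e₂ - 1) := by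
          rw [← pow_add]; exact pow_le_pow_of_le_one hε₀ hε₁ (by omega)

theorem AbvVanishesExactlyTo.mul (habv : IsNonarchimedean abv) (hε₀ : 0 ≤ ε) (hε₁ : ε ≤ 1)
    (hf : AbvVanishesExactlyTo abv ε f x e₁) (hg : AbvVanishesExactlyTo abv ε g x e₂) :
    AbvVanishesExactlyTo abv ε (f * g) x (e₁ + e₂) :=
  ⟨by rw [eval_mul, map_mul, hf.1, hg.1, pow_add],
    (hf.abvVanishesTo.mul habv hε₀ hε₁ hg.abvVanishesTo).2⟩

theorem AbvVanishesExactlyTo.pow (habv : IsNonarchimedean abv) (hε₀ : 0 ≤ ε) (hε₁ : ε ≤ 1)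
    (hf : AbvVanishesExactlyTo abv ε f x e) (k : ℕ) :
    AbvVanishesExactlyTo abv ε (f ^ k) x (e * k) := by
  induction k with
  | zero => simpa using abvVanishesExactlyTo_one
  | succ k ih => simpa [pow_succ, mul_add] using ih.mul habv hε₀ hε₁ hf

theorem AbvVanishesTo.prod (habv : IsNonarchimedean abv) (hε₀ : 0 ≤ ε) (hε₁ : ε ≤ 1)
    {ι : Type*} {s : Finset ι} {f : ι → F[X]} {e : ι → ℕ}
    (h : ∀ i ∈ s, AbvVanishesTo abv ε (f i) x (e i)) :
    AbvVanishesTo abv ε (∏ i ∈ s, f i) x (∑ i ∈ s, e i) := by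
  classical
  induction s using Finset.induction_on with
  | empty => simpa using abvVanishesTo_one
  | insert i s hi ih =>
    rw [Finset.prod_insert hi, Finset.sum_insert hi]
    exact (h i (s.mem_insert_self i)).mul habv hε₀ hε₁
      (ih fun j hj => h j (Finset.mem_insert_of_mem hj))

theorem AbvVanishesExactlyTo.prod (habv : IsNonarchimedean abv) (hε₀ : 0 ≤ ε) (hε₁ : ε ≤ 1)
    {ι : Type*} {s : Finset ι} {f : ι → F[X]} {e : ι → ℕ}
    (h : ∀ i ∈ s, AbvVanishesExactlyTo abv ε (f i) x (e i)) :
    AbvVanishesExactlyTo abv ε (∏ i ∈ s, f i) x (∑ i ∈ s, e i) := by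
  classical
  induction s using Finset.induction_on with
  | empty => simpa using abvVanishesExactlyTo_one
  | insert i s hi ih =>
    rw [Finset.prod_insert hi, Finset.sum_insert hi]
    exact (h i (s.mem_insert_self i)).mul habv hε₀ hε₁
      (ih fun j hj => h j (Finset.mem_insert_of_mem hj))

theorem AbvVanishesTo.abv_eval_derivative_div_le (habv : IsNonarchimedean abv) (hε₀ : 0 < ε)
    (hε₁ : ε ≤ 1) {N D : F[X]} {m : ℕ} (hN : AbvVanishesTo abv ε N x (m + 2))
    (hD : AbvVanishesExactlyTo abv ε D x m) :
    abv (((derivative N).eval x * D.eval x - N.eval x * (derivative D).eval x) /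
      D.eval x ^ 2) ≤ ε := by
  rw [map_div₀, map_pow, hD.1, div_le_iff₀ (by positivity), sub_eq_add_neg]
  refine (habv _ _).trans (max_le ?_ ?_)
  · rw [map_mul, hD.1]
    calc _ ≤ ε ^ (m + 1) * ε ^ m := by gcongr; exact hN.2
      _ = ε * (ε ^ m) ^ 2 := by ring
  · rw [abv.map_neg, map_mul]
    calc _ ≤ ε ^ (m + 2) * ε ^ (m - 1) :=
          mul_le_mul hN.1 hD.2 (abv.nonneg _) (by positivity)
      _ ≤ ε ^ (2 * m + 1) := by
          rw [← pow_add]; exact pow_le_pow_of_le_one hε₀.le hε₁ (by omega)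
      _ = ε * (ε ^ m) ^ 2 := by ring

end Polynomial

theorem Nat.Prime.inv_cast_le_one {p : ℕ} (hp : p.Prime) : (p : ℝ)⁻¹ ≤ 1 :=
  inv_le_one_of_one_le₀ (mod_cast hp.one_le)

namespace Rat.AbsoluteValue

variable {p : ℕ} [hp : Fact p.Prime]

theorem isNonarchimedean_padic : IsNonarchimedean (padic p) := fun u v => by
  simp only [padic_eq_padicNorm]
  exact_mod_cast padicNorm.nonarchimedean

theorem padic_natCast_self : padic p p = (p : ℝ)⁻¹ := by
  simp [padicNorm.padicNorm_p_of_prime]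

theorem padic_intCast_eq_one {z : ℤ} (hz : ¬(p : ℤ) ∣ z) : padic p z = 1 := by
  simp only [padic_eq_padicNorm]
  exact_mod_cast (padicNorm.int_eq_one_iff z).2 hz

theorem padic_intCast_eq_one_of_abs_lt {z : ℤ} (hz₀ : z ≠ 0) (hz : |z| < p) : padic p z = 1 :=
  padic_intCast_eq_one fun hdvd => hz₀ (Int.eq_zero_of_abs_lt_dvd hdvd hz)

theorem padic_natCast_mul_eq_inv {c : ℕ} (hc₀ : c ≠ 0) (hc : c < p) :
    padic p (c * p) = (p : ℝ)⁻¹ := by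
  have hc' : padic p (c : ℤ) = 1 :=
    padic_intCast_eq_one_of_abs_lt (by omega) (by rw [Nat.abs_cast]; exact_mod_cast hc)
  rw [map_mul, padic_natCast_self, ← Int.cast_natCast, hc', one_mul]

theorem padic_intCast_le_inv_of_dvd {z : ℤ} (hz : (p : ℤ) ∣ z) : padic p z ≤ (p : ℝ)⁻¹ := by
  obtain ⟨w, rfl⟩ := hz
  rw [Int.cast_mul, map_mul, Int.cast_natCast, padic_natCast_self]
  exact mul_le_of_le_one_right (by positivity) (padic_le_one p w)

theorem padic_pred_mul (v : ℚ) : padic p (((p : ℚ) - 1) * v) = padic p v := by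
  have hp₂ := hp.out.two_le
  have h : padic p (((p : ℤ) - 1 : ℤ) : ℚ) = 1 :=
    padic_intCast_eq_one_of_abs_lt (by omega) (abs_lt.mpr ⟨by omega, by omega⟩)
  push_cast at h
  rw [map_mul, h, one_mul]

theorem exists_padicInt_eq_mul_of_padic_le {y : ℚ} (h : padic p y ≤ (p : ℝ)⁻¹) :
    ∃ c : ℤ_[p], (y : ℚ_[p]) = p * c := by
  have hp₀ : (p : ℚ_[p]) ≠ 0 := by exact_mod_cast hp.out.ne_zero
  refine ⟨⟨y / p, ?_⟩, by simp [mul_div_cancel₀ _ hp₀]⟩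
  rw [norm_div, Padic.norm_p, Padic.eq_padicNorm, div_le_one (inv_pos.mpr (mod_cast hp.out.pos))]
  exact h

end Rat.AbsoluteValue

open Rat.AbsoluteValue

section PadicOrder

open Finset

variable {p : ℕ} [hp : Fact p.Prime]

theorem padic_rnumFactor_le_one {a : ℕ} {r : ℚ} (hr : (a : ℚ) = ((p : ℚ) - 1) * r) (k j : ℕ) :
    padic p (-(k : ℚ) + (1 - r - p + j)) ≤ 1 := by
  rw [← padic_pred_mul, show ((p : ℚ) - 1) * (-(k : ℚ) + (1 - r - p + j))
    = (((p - 1) * (1 - k - p + j) - a : ℤ) : ℚ) by push_cast; linear_combination hr]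
  exact padic_le_one p _

theorem padic_rnumFactor_le_inv {a : ℕ} {r : ℚ} (hr : (a : ℚ) = ((p : ℚ) - 1) * r) (d : ℕ) :
    padic p (-((a + d + 1 : ℕ) : ℚ) + (1 - r - p + d)) ≤ (p : ℝ)⁻¹ := by
  rw [← padic_pred_mul, show ((p : ℚ) - 1) * (-((a + d + 1 : ℕ) : ℚ) + (1 - r - p + d))
    = ((p * (1 - p - a) : ℤ) : ℚ) by push_cast; linear_combination hr]
  exact padic_intCast_le_inv_of_dvd (dvd_mul_right _ _)

theorem abvVanishesTo_rnumBlock {a k : ℕ} {r : ℚ} (hr : (a : ℚ) = ((p : ℚ) - 1) * r)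
    (hk : k < p) :
    AbvVanishesTo (padic p) (p : ℝ)⁻¹
      (∏ j ∈ range (p - a - 1), (X + C (1 - r - (p : ℚ) + (j : ℚ)))) (-(k : ℚ))
      (if a < k then 1 else 0) := by
  have hε₁ := hp.out.inv_cast_le_one
  have hrest : ∀ s : Finset ℕ, AbvVanishesTo (padic p) (p : ℝ)⁻¹
      (∏ j ∈ s, (X + C (1 - r - (p : ℚ) + (j : ℚ)))) (-(k : ℚ)) 0 := fun s => by
    simpa using AbvVanishesTo.prod isNonarchimedean_padic (by positivity) hε₁ fun j _ =>
      .of_le_one zero_le_one (by simpa using padic_rnumFactor_le_one hr k j) (by simp)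
  split_ifs with hak
  · obtain ⟨d, rfl⟩ := Nat.exists_eq_add_of_lt hak
    have hd : d ∈ range (p - a - 1) := mem_range.mpr (by omega)
    have hvanish : AbvVanishesTo (padic p) (p : ℝ)⁻¹ (X + C (1 - r - (p : ℚ) + (d : ℚ)))
        (-((a + d + 1 : ℕ) : ℚ)) 1 :=
      .of_le_one le_rfl (by simpa using padic_rnumFactor_le_inv hr d) (by simp)
    rw [← mul_prod_erase _ _ hd]
    exact hvanish.mul isNonarchimedean_padic (by positivity) hε₁ (hrest _)
  · exact hrest _

theorem abvVanishesTo_rnum {n k : ℕ} {r : ℕ → ℚ} {a : ℕ → ℕ}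
    (hr : ∀ i ∈ Icc 2 n, (a (i - 1) : ℚ) = ((p : ℚ) - 1) * r (i - 1)) (hk : k < p) :
    AbvVanishesTo (padic p) (p : ℝ)⁻¹ (Rnum n p r a) (-(k : ℚ)) #{i ∈ Icc 2 n | a (i - 1) < k} := by
  have h := AbvVanishesTo.prod isNonarchimedean_padic (by positivity) hp.out.inv_cast_le_one
    fun i hi => abvVanishesTo_rnumBlock (hr i hi) hk
  rwa [sum_boole, Nat.cast_id] at h

theorem abvVanishesExactlyTo_X_add_natCast {k u : ℕ} (hk : k < p) (hu : u < p) (hne : u ≠ k) :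
    AbvVanishesExactlyTo (padic p) (p : ℝ)⁻¹ (X + C (u : ℚ)) (-(k : ℚ)) 0 := by
  refine .of_le_one zero_le_one ?_ (by simp)
  have h := padic_intCast_eq_one_of_abs_lt (p := p) (z := u - k) (by omega)
    (abs_lt.mpr ⟨by omega, by omega⟩)
  push_cast at h
  simpa [neg_add_eq_sub] using h

theorem abvVanishesExactlyTo_rdenFactor {i j k : ℕ} (hi : i + 1 < p) (hj : j + 1 < p) (hk : k < p) :
    AbvVanishesExactlyTo (padic p) (p : ℝ)⁻¹ (-X + C (1 + (i : ℚ) * p + j)) (-(k : ℚ))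
      (if j = p - 1 - k then 1 else 0) := by
  refine .of_le_one (by split_ifs <;> simp) ?_ (by simp)
  simp only [eval_add, eval_neg, eval_X, eval_C, neg_neg]
  split_ifs with hjk
  · rw [show (k : ℚ) + (1 + i * p + j) = ((i + 1 : ℕ) : ℚ) * p by
      subst hjk; rw [Nat.cast_sub (by omega), Nat.cast_sub (by omega)]; push_cast; ring]
    simpa using padic_natCast_mul_eq_inv (p := p) (c := i + 1) (by omega) hi
  · have hw : ¬(p : ℤ) ∣ k + 1 + j - p := fun hdvd => by
      have := Int.eq_zero_of_abs_lt_dvd hdvd (abs_lt.mpr ⟨by omega, by omega⟩)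
      omega
    have h := padic_intCast_eq_one (p := p) (z := (k + 1 + j - p) + p * (i + 1))
      fun hdvd => hw ((Int.dvd_add_left (dvd_mul_right _ _)).mp hdvd)
    push_cast at h
    rw [pow_zero, ← h]
    ring_nf

theorem abvVanishesExactlyTo_rdenBlock {b i k : ℕ} (hi : i + 1 < p) (hk : k < p) :
    AbvVanishesExactlyTo (padic p) (p : ℝ)⁻¹
      (∏ j ∈ range (p - b - 1), (-X + C (1 + (i : ℚ) * p + (j : ℚ)))) (-(k : ℚ))
      (if b < k then 1 else 0) := by
  have h := AbvVanishesExactlyTo.prod isNonarchimedean_padic (by positivity)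
    hp.out.inv_cast_le_one fun j (hj : j ∈ range (p - b - 1)) =>
      abvVanishesExactlyTo_rdenFactor (j := j) hi (by rw [mem_range] at hj; omega) hk
  have hmem : p - 1 - k ∈ range (p - b - 1) ↔ b < k := by rw [mem_range]; omega
  simpa only [sum_ite_eq', hmem] using h

theorem abvVanishesExactlyTo_rdenNoK {nhat a₁ b₁ k : ℕ} {b : ℕ → ℕ} (ha₁ : a₁ < k)
    (hb₁ : b₁ < k) (hk : k < p) (hnhat : nhat + 1 < p) :
    AbvVanishesExactlyTo (padic p) (p : ℝ)⁻¹ (RdenNoK p nhat a₁ b₁ b k) (-(k : ℚ))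
      #{i ∈ Icc 2 nhat | b (i - 1) < k} := by
  have hna := isNonarchimedean_padic (p := p)
  have hε₀ : (0 : ℝ) ≤ (p : ℝ)⁻¹ := by positivity
  have hε₁ := hp.out.inv_cast_le_one
  have hunit : ∀ {u : ℕ}, u < p → u ≠ k →
      AbvVanishesExactlyTo (padic p) (p : ℝ)⁻¹ (X + C (u : ℚ)) (-(k : ℚ)) 0 :=
    abvVanishesExactlyTo_X_add_natCast hk
  have hA : AbvVanishesExactlyTo (padic p) (p : ℝ)⁻¹
      (∏ j ∈ range (a₁ + 1), (X + C (j : ℚ)) ^ 2) (-(k : ℚ)) 0 := by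
    simpa using AbvVanishesExactlyTo.prod hna hε₀ hε₁ fun j hj =>
      (hunit (u := j) (by rw [mem_range] at hj; omega) (by rw [mem_range] at hj; omega)).pow
        hna hε₀ hε₁ 2
  have hB : AbvVanishesExactlyTo (padic p) (p : ℝ)⁻¹
      (∏ j ∈ range (b₁ - a₁), (X + C ((a₁ : ℚ) + 1 + j))) (-(k : ℚ)) 0 := by
    simpa using AbvVanishesExactlyTo.prod hna hε₀ hε₁ fun j hj =>
      hunit (u := a₁ + 1 + j) (by rw [mem_range] at hj; omega) (by rw [mem_range] at hj; omega)
  have hC : AbvVanishesExactlyTo (padic p) (p : ℝ)⁻¹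
      (∏ j ∈ (range (p - b₁ - 1)).filter (fun j => j ≠ k - b₁ - 1),
        (X + C ((b₁ : ℚ) + 1 + j)) ^ 2) (-(k : ℚ)) 0 := by
    simpa using AbvVanishesExactlyTo.prod hna hε₀ hε₁ fun j hj =>
      (hunit (u := b₁ + 1 + j) (by simp at hj; omega) (by simp at hj; omega)).pow hna hε₀ hε₁ 2
  have hF : AbvVanishesExactlyTo (padic p) (p : ℝ)⁻¹
      (∏ i ∈ Icc 2 nhat, ∏ j ∈ range (p - b (i - 1) - 1), (-X + C (1 + (i : ℚ) * p + (j : ℚ))))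
      (-(k : ℚ)) #{i ∈ Icc 2 nhat | b (i - 1) < k} := by
    have h := AbvVanishesExactlyTo.prod hna hε₀ hε₁ fun i (hi : i ∈ Icc 2 nhat) =>
      abvVanishesExactlyTo_rdenBlock (b := b (i - 1)) (i := i) (by rw [mem_Icc] at hi; omega) hk
    rwa [sum_boole, Nat.cast_id] at h
  have h := ((hA.mul hna hε₀ hε₁ hB).mul hna hε₀ hε₁ hC).mul hna hε₀ hε₁ hF
  rwa [zero_add, zero_add, zero_add] at h

end PadicOrder

open Finset in
theorem card_filter_Icc_add_two_le {P Q : ℕ → Prop} [DecidablePred P] [DecidablePred Q]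
    {m n : ℕ} (hn : 3 ≤ n) (hmn : m + 2 ≤ n) (h₂ : Q 2) (h₃ : Q 3)
    (hPQ : ∀ i ∈ Icc 2 m, P i → Q (i + 2)) :
    #{i ∈ Icc 2 m | P i} + 2 ≤ #{i ∈ Icc 2 n | Q i} := by
  set S := {i ∈ Icc 2 m | P i}
  have hS : ∀ i ∈ S, 2 ≤ i ∧ i ≤ m ∧ P i := fun i hi => by simpa [S, and_assoc] using hi
  calc #S + 2 = #(insert 2 (insert 3 (S.map (addRightEmbedding 2)))) := by
        rw [card_insert_of_notMem, card_insert_of_notMem, card_map]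
        · simp only [mem_map, addRightEmbedding_apply, not_exists, not_and]
          intro i hi; have := hS i hi; omega
        · simp only [mem_insert, mem_map, addRightEmbedding_apply, not_or, not_exists, not_and]
          exact ⟨by omega, fun i hi => by have := hS i hi; omega⟩
    _ ≤ #{i ∈ Icc 2 n | Q i} := by
        refine card_le_card fun i hi => ?_
        simp only [mem_insert, mem_map, addRightEmbedding_apply] at hi
        rw [mem_filter, mem_Icc]
        rcases hi with rfl | rfl | ⟨j, hj, rfl⟩
        · exact ⟨⟨le_rfl, by omega⟩, h₂⟩
        · exact ⟨⟨by omega, hn⟩, h₃⟩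
        · obtain ⟨hj₂, hjm, hPj⟩ := hS j hj
          exact ⟨⟨by omega, by omega⟩, hPQ j (mem_Icc.mpr ⟨hj₂, hjm⟩) hPj⟩

theorem nhat_add_two_le {n nhat : ℕ} {q : ℕ → ℚ} (hn : 3 ≤ n) (hq : q (n - 2) = 1)
    (hnhat : ∀ i, 2 ≤ i → i ≤ n → (q (i - 1) < 1 ↔ i ≤ nhat)) : nhat + 2 ≤ n := by
  by_contra
  have := (hnhat (n - 1) (by omega) (by omega)).2 (by omega)
  rw [show n - 1 - 1 = n - 2 by omega, hq] at this
  exact lt_irrefl _ this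

theorem residue_Bk_vanishes_mod_p_far_range_general
    (n : ℕ) (hn : 2 ≤ n)
    (r q : ℕ → ℚ)
    (hr_mono : ∀ i j, i ≤ j → j < n → r i ≤ r j)
    (hq_top' : q (n - 2) = 1)
    (hqr : ∀ j, j + 2 < n → r (j + 2) < q j)
    (p : ℕ) [Fact (Nat.Prime p)]
    (a b : ℕ → ℕ)
    (ha : ∀ i, i < n → (a i : ℚ) = ((p : ℚ) - 1) * r i)
    (hb : ∀ i, i < n → (b i : ℚ) = ((p : ℚ) - 1) * q i)
    (nhat : ℕ)
    (hnhat : ∀ i, 2 ≤ i → i ≤ n → (q (i - 1) < 1 ↔ i ≤ nhat))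
    (hp_nhat : nhat + 1 < p)
    (k : ℕ) (hk : b 0 + 1 ≤ k) (hk' : k ≤ p - 1) :
    -- `(t+k)²·R(t) = N(t)/RdenNoK(t)` is regular at `t = −k`:
    (RdenNoK p nhat (a 0) (b 0) b k).eval (-(k : ℚ)) ≠ 0 ∧
      -- and `B_k = ((t+k)²R)'(−k) = (N'·D₀ − N·D₀')/D₀²` at `t = −k` is `≡ 0 mod p`:
      ∃ c : ℤ_[p],
        ((((derivative (Rnum n p r a)).eval (-(k : ℚ)) *
              (RdenNoK p nhat (a 0) (b 0) b k).eval (-(k : ℚ)) -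
            (Rnum n p r a).eval (-(k : ℚ)) *
              (derivative (RdenNoK p nhat (a 0) (b 0) b k)).eval (-(k : ℚ))) /
            ((RdenNoK p nhat (a 0) (b 0) b k).eval (-(k : ℚ))) ^ 2 : ℚ) : ℚ_[p])
          = (p : ℚ_[p]) * (c : ℚ_[p]) := by
  have hp : p.Prime := Fact.out
  have hε : (0 : ℝ) < (p : ℝ)⁻¹ := inv_pos.mpr (mod_cast hp.pos)
  have hp₁ : (0 : ℚ) < p - 1 := sub_pos.mpr (mod_cast hp.one_lt)
  have ha_le : ∀ i j, i ≤ j → j < n → a i ≤ a j := fun i j hij hj => by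
    exact_mod_cast (ha i (by omega)).trans_le <| (mul_le_mul_of_nonneg_left
      (hr_mono i j hij hj) hp₁.le).trans_eq (ha j hj).symm
  have ha_lt : ∀ i j, i < n → j < n → r i < q j → a i < b j := fun i j hi hj h => by
    exact_mod_cast (ha i hi).trans_lt <| (mul_lt_mul_of_pos_left h hp₁).trans_eq (hb j hj).symm
  have hn₃ : 3 ≤ n := by
    by_contra
    have hb₀ := hb 0 (by omega)
    rw [show n - 2 = 0 by omega] at hq_top'
    rw [hq_top', mul_one, ← Nat.cast_pred hp.pos, Nat.cast_inj] at hb₀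
    omega
  have hnhat₂ := nhat_add_two_le hn₃ hq_top' hnhat
  have ha₂ : a 2 < b 0 := ha_lt 2 0 (by omega) (by omega) (hqr 0 (by omega))
  have hcard := card_filter_Icc_add_two_le (P := fun i => b (i - 1) < k)
    (Q := fun i => a (i - 1) < k) hn₃ hnhat₂
    (show a 1 < k by have := ha_le 1 2 (by omega) (by omega); omega) (show a 2 < k by omega)
    fun i hi hbi => by
      rw [Finset.mem_Icc] at hi
      obtain ⟨j, rfl⟩ : ∃ j, i = j + 1 := ⟨i - 1, by omega⟩
      change b j < k at hbi
      change a (j + 2) < k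
      have := ha_lt (j + 2) j (by omega) (by omega) (hqr j (by omega))
      omega
  have hN := (abvVanishesTo_rnum (r := r) (a := a)
    (fun i hi => ha (i - 1) (by rw [Finset.mem_Icc] at hi; omega)) (by omega : k < p)).mono
    hε.le hp.inv_cast_le_one hcard
  have hD := abvVanishesExactlyTo_rdenNoK (b := b) (by have := ha_le 0 2; omega : a 0 < k)
    (by omega : b 0 < k) (by omega : k < p) hp_nhat
  exact ⟨hD.eval_ne_zero hε.ne', exists_padicInt_eq_mul_of_padic_le
    (hN.abv_eval_derivative_div_le isNonarchimedean_padic hε hp.inv_cast_le_one hD)⟩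

/-- Under the standing hypotheses on `(α,β)` and `p ≡ 1 (mod M)` with
`p > n̂ + 1`: for every `k` with `b₁ + 1 ≤ k ≤ p − 1`, the rational function `(t+k)²·R(t)` is
regular at `t = −k` (`R` has a pole of order at most `2` there), and the value `B_k` of its
derivative `(d/dt)[(t+k)²·R(t)]` at `t = −k` satisfies `B_k ≡ 0 (mod p)`. -/
theorem residue_Bk_vanishes_mod_p_far_range
    (n : ℕ) (hn : 2 ≤ n)
    (r q : ℕ → ℚ)
    (hr_pos : ∀ i, i < n → 0 < r i) (hr_lt : ∀ i, i < n → r i < 1)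
    (hr_mono : ∀ i j, i ≤ j → j < n → r i ≤ r j)
    (hq_pos : ∀ i, i < n → 0 < q i)
    (hq_mono : ∀ i j, i ≤ j → j < n → q i ≤ q j)
    (hq_top : q (n - 1) = 1) (hq_top' : q (n - 2) = 1)
    (hqr : ∀ j, j + 2 < n → r (j + 2) < q j)
    (hprim : ∀ i, i < n → ∀ j, j < n → ∀ z : ℤ, r i - q j ≠ (z : ℚ))
    (M : ℕ) (hM : 0 < M)
    (hMr : ∀ i, i < n → ∃ z : ℤ, (M : ℚ) * r i = (z : ℚ))
    (hMq : ∀ i, i < n → ∃ z : ℤ, (M : ℚ) * q i = (z : ℚ))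
    (p : ℕ) [Fact (Nat.Prime p)] (hpM : p ≡ 1 [MOD M])
    (a b : ℕ → ℕ)
    (ha : ∀ i, i < n → (a i : ℚ) = ((p : ℚ) - 1) * r i)
    (hb : ∀ i, i < n → (b i : ℚ) = ((p : ℚ) - 1) * q i)
    (nhat : ℕ) (hnhat_le : nhat ≤ n) (hnhat0 : nhat = 0 ∨ 2 ≤ nhat)
    (hnhat : ∀ i, 2 ≤ i → i ≤ n → (q (i - 1) < 1 ↔ i ≤ nhat))
    (hp_nhat : nhat + 1 < p)
    (k : ℕ) (hk : b 0 + 1 ≤ k) (hk' : k ≤ p - 1) :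
    -- `(t+k)²·R(t) = N(t)/RdenNoK(t)` is regular at `t = −k`:
    (RdenNoK p nhat (a 0) (b 0) b k).eval (-(k : ℚ)) ≠ 0 ∧
      -- and `B_k = ((t+k)²R)'(−k) = (N'·D₀ − N·D₀')/D₀²` at `t = −k` is `≡ 0 mod p`:
      ∃ c : ℤ_[p],
        ((((derivative (Rnum n p r a)).eval (-(k : ℚ)) *
              (RdenNoK p nhat (a 0) (b 0) b k).eval (-(k : ℚ)) -
            (Rnum n p r a).eval (-(k : ℚ)) *
              (derivative (RdenNoK p nhat (a 0) (b 0) b k)).eval (-(k : ℚ))) /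
            ((RdenNoK p nhat (a 0) (b 0) b k).eval (-(k : ℚ))) ^ 2 : ℚ) : ℚ_[p])
          = (p : ℚ_[p]) * (c : ℚ_[p]) :=
  residue_Bk_vanishes_mod_p_far_range_general n hn r q hr_mono hq_top' hqr p a b ha hb nhat hnhat
    hp_nhat k hk hk'
end
end
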